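/- arXiv:1409.2857 — 4 statements merged into one kernel-verified Lean document; each statement's English description precedes it below -/
import Mathlib

section
/- If X is paracompact and X_∗ is a well-pointed extension of X, then X_∗ is paracompact Hausdorff. -/
open Topology TopologicalSpace

/-- A *pointed extension* of a topological space `X`: a compactly generated Hausdorff
topology on `Option X` (the basepoint `∗` is `none`) for which the inclusion
`some : X → Option X` is an open embedding (so it extends the topology of `X`, with `X` open). -/
structure PointedExt (X : Type u) [TopologicalSpace X] : Type u where
  top : TopologicalSpace (Option X)
  t2 : @T2Space (Option X) top
  cg : @CompactlyGeneratedSpace (Option X) top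
  emb : @IsOpenEmbedding X (Option X) _ top some

/-- The disjoint-basepoint topology `X₊` on `Option X`: a set is open iff its trace on `X` is. -/
def plusTop (X : Type u) [t : TopologicalSpace X] : TopologicalSpace (Option X) :=
  t.coinduced some

/-- The one-point compactification topology `X⁺` on `Option X` (`none` is the point at infinity). -/
def onePointTop (X : Type u) [TopologicalSpace X] : TopologicalSpace (Option X) :=
  inferInstanceAs (TopologicalSpace (OnePoint X))

/-- The canonical map `X₊ → X_∗ ×_{X⁺} X_∗'` is a homeomorphism.  All three canonical maps to
`X⁺` are the identity on underlying sets, so the fiber product is the diagonal copy of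
`Option X`, whose subspace topology is `P.top ⊓ Q.top`; the canonical map being a
homeomorphism says exactly that this topology is the disjoint-basepoint topology. -/
def Pairs {X : Type u} [TopologicalSpace X] (P Q : PointedExt X) : Prop :=
  P.top ⊓ Q.top = plusTop X

/-- `N` is *the negation* of `P`: it pairs with `P`, and is final (maximal, i.e. coarsest)
among pointed extensions pairing with `P`.  (`Q.top ≤ N.top` says exactly that the identity
map `Q → N` is continuous.) -/
def IsNegation {X : Type u} [TopologicalSpace X] (P N : PointedExt X) : Prop :=
  Pairs P N ∧ ∀ Q : PointedExt X, Pairs P Q → Q.top ≤ N.top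

/-- `P` is *well-pointed*: the canonical comparison map `P → P^¬¬` (the identity on underlying
sets) is a homeomorphism, i.e. the double negation of `P` has the same topology as `P`. -/
def WellPointed {X : Type u} [TopologicalSpace X] (P : PointedExt X) : Prop :=
  ∃ N NN : PointedExt X, IsNegation P N ∧ IsNegation N NN ∧ NN.top = P.top

/-- If `X` is paracompact (and locally compact Hausdorff) and `X_∗` is a
well-pointed extension of `X` (equivalently: `∗` admits a compact neighborhood in `X_∗`),
then `X_∗` is paracompact Hausdorff. -/
theorem wellPointed_paracompact (X : Type u) [TopologicalSpace X]
    [LocallyCompactSpace X] [T2Space X] [ParacompactSpace X] (P : PointedExt X)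
    (hw : ∃ K : Set (Option X),
      @IsCompact (Option X) P.top K ∧ none ∈ @interior (Option X) P.top K) :
    @ParacompactSpace (Option X) P.top ∧ @T2Space (Option X) P.top := by
  classical
  letI := P.top
  haveI := P.t2
  obtain ⟨K, hK, hKn⟩ := hw
  refine ⟨⟨fun ι s hso hsc => ?_⟩, P.t2⟩
  -- finite subcover of the compact neighborhood K of none
  obtain ⟨T, hT⟩ := hK.elim_finite_subcover s hso (by rw [hsc]; exact Set.subset_univ K)
  -- locally finite precise refinement of the cover restricted to X
  obtain ⟨v, hvo, hvc, hvlf, hvs⟩ := precise_refinement (fun i => some ⁻¹' s i)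
    (fun i => (hso i).preimage P.emb.continuous)
    (by rw [← Set.preimage_iUnion, hsc, Set.preimage_univ])
  set t : ι → Set (Option X) := fun i =>
    (some '' v i \ K) ∪ (if i ∈ T then s i else ∅) with ht
  have hto : ∀ i, IsOpen (t i) := fun i => by
    refine (((P.emb.isOpenMap _ (hvo i)).sdiff hK.isClosed).union ?_)
    split_ifs with h
    · exact hso i
    · exact isOpen_empty
  have htsub : ∀ i, t i ⊆ s i := fun i => by
    apply Set.union_subset
    · exact Set.diff_subset.trans
        ((Set.image_mono (f := some) (hvs i)).trans (Set.image_preimage_subset _ _))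
    · split_ifs with h
      · exact subset_rfl
      · exact Set.empty_subset _
  refine ⟨ι, t, hto, ?_, ?_, fun i => ⟨i, htsub i⟩⟩
  · rw [Set.eq_univ_iff_forall]
    intro x
    rcases Classical.em (x ∈ K) with hxK | hxK
    · obtain ⟨i, hiT, hxi⟩ := Set.mem_iUnion₂.mp (hT hxK)
      exact Set.mem_iUnion.mpr ⟨i, Or.inr (by rw [if_pos hiT]; exact hxi)⟩
    · cases x with
      | none => exact absurd (interior_subset hKn) hxK
      | some a =>
        obtain ⟨i, hai⟩ := Set.mem_iUnion.mp (hvc ▸ Set.mem_univ a)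
        exact Set.mem_iUnion.mpr ⟨i, Or.inl ⟨⟨a, hai, rfl⟩, hxK⟩⟩
  · intro x
    cases x with
    | none =>
      refine ⟨interior K, isOpen_interior.mem_nhds hKn, T.finite_toSet.subset ?_⟩
      rintro i ⟨y, hy1, hy2⟩
      rcases hy1 with h | h
      · exact absurd (interior_subset hy2) h.2
      · by_contra hiT
        rw [if_neg (by simpa using hiT)] at h
        exact h
    | some a =>
      obtain ⟨W, hW, hWf⟩ := hvlf a
      refine ⟨some '' W, P.emb.isOpenMap.image_mem_nhds hW,
        (hWf.union T.finite_toSet).subset ?_⟩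
      rintro i ⟨y, hy1, ⟨b, hbW, rfl⟩⟩
      rcases hy1 with ⟨⟨c, hc, hcb⟩, _⟩ | h
      · exact Or.inl ⟨b, Option.some_injective X hcb ▸ hc, hbW⟩
      · refine Or.inr ?_
        by_contra hiT
        rw [if_neg (by simpa using hiT)] at h
        exact h
end

section
/- Let X̄ be a compact Hausdorff space and ∂_L, ∂_R ⊆ X̄ disjoint closed subsets with ∂X̄ := ∂_L ∪ ∂_R and X := X̄ ∖ ∂X̄. Then the quotient spaces X_∗ := (X̄ ∖ ∂_R)/∂_L and X_∗^¬ := (X̄ ∖ ∂_L)/∂_R (collapsing the indicated closed subset to the basepoint) are both well-pointed extensions of X (i.e., each is locally compact Hausdorff with X open and ∗ admitting a compact neighborhood), and they are each other's negations: the canonical map X₊ → X_∗ ×_{X⁺} X_∗^¬ is a homeomorphism and each is maximal with this property relative to the other. -/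
open Topology TopologicalSpace

variable {Xb : Type u} [TopologicalSpace Xb]

open Classical in
/-- The quotient map `X̄ ∖ ∂_R → (X̄ ∖ ∂_R)/∂_L` collapsing `∂_L` to the basepoint, with
target identified with `Option X` where `X = X̄ ∖ (∂_L ∪ ∂_R)`. -/
noncomputable def collapseL (L R : Set Xb) :
    {x : Xb // x ∉ R} → Option {x : Xb // x ∉ L ∪ R} :=
  fun x => if h : (x : Xb) ∈ L then none else some ⟨x.1, fun hx => hx.elim h x.2⟩

open Classical in
/-- The quotient map `X̄ ∖ ∂_L → (X̄ ∖ ∂_L)/∂_R` collapsing `∂_R` to the basepoint. -/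
noncomputable def collapseR (L R : Set Xb) :
    {x : Xb // x ∉ L} → Option {x : Xb // x ∉ L ∪ R} :=
  fun x => if h : (x : Xb) ∈ R then none else some ⟨x.1, fun hx => hx.elim x.2 h⟩

/-! ### Auxiliary development -/


open Classical in
noncomputable def colMap (A B S : Set Xb) (hS : S = A ∪ B) :
    {x : Xb // x ∉ B} → Option {x : Xb // x ∉ S} :=
  fun x => if h : (x : Xb) ∈ A then none else
    some ⟨x.1, by rw [hS]; rintro (h' | h'); exacts [h h', x.2 h']⟩

lemma colMap_of_mem (A B S : Set Xb) (hS : S = A ∪ B) {y : {x : Xb // x ∉ B}}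
    (h : (y : Xb) ∈ A) : colMap A B S hS y = none := dif_pos h

lemma not_mem_S_of (A B S : Set Xb) (hS : S = A ∪ B) {y : {x : Xb // x ∉ B}}
    (h : (y : Xb) ∉ A) : (y : Xb) ∉ S := by
  rw [hS]; rintro (h' | h'); exacts [h h', y.2 h']

lemma colMap_of_not_mem (A B S : Set Xb) (hS : S = A ∪ B) {y : {x : Xb // x ∉ B}}
    (h : (y : Xb) ∉ A) :
    colMap A B S hS y = some ⟨y.1, not_mem_S_of A B S hS h⟩ := dif_neg h

/-- inclusion of `X = {x ∉ S}` into `Y = {x ∉ B}`. -/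
def incl (A B S : Set Xb) (hS : S = A ∪ B) : {x : Xb // x ∉ S} → {x : Xb // x ∉ B} :=
  fun x => ⟨x.1, fun hb => x.2 ((Set.ext_iff.mp hS _).mpr (Or.inr hb))⟩

lemma not_mem_A (A B S : Set Xb) (hS : S = A ∪ B) {x : {x : Xb // x ∉ S}} : (x : Xb) ∉ A :=
  fun ha => x.2 ((Set.ext_iff.mp hS _).mpr (Or.inl ha))

lemma colMap_incl (A B S : Set Xb) (hS : S = A ∪ B) (x : {x : Xb // x ∉ S}) :
    colMap A B S hS (incl A B S hS x) = some x := by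
  rw [colMap_of_not_mem A B S hS (not_mem_A A B S hS)]
  rfl

lemma continuous_incl (A B S : Set Xb) (hS : S = A ∪ B) : Continuous (incl A B S hS) :=
  Continuous.subtype_mk continuous_subtype_val _

lemma isOpenEmbedding_incl (A B S : Set Xb) (hS : S = A ∪ B) (hA : IsClosed A) :
    IsOpenEmbedding (incl A B S hS) := by
  refine ⟨IsEmbedding.of_comp (continuous_incl A B S hS) continuous_subtype_val ?_, ?_⟩
  · exact (IsEmbedding.subtypeVal : IsEmbedding
      (Subtype.val : {x : Xb // x ∉ S} → Xb))
  · have : Set.range (incl A B S hS) = Subtype.val ⁻¹' Aᶜ := by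
      ext y
      constructor
      · rintro ⟨x, rfl⟩; exact not_mem_A A B S hS
      · intro (hy : (y : Xb) ∉ A)
        exact ⟨⟨y.1, not_mem_S_of A B S hS hy⟩, rfl⟩
    rw [this]
    exact hA.isOpen_compl.preimage continuous_subtype_val

/-- the coinduced topology -/
noncomputable def colTop (A B S : Set Xb) (hS : S = A ∪ B) :
    TopologicalSpace (Option {x : Xb // x ∉ S}) :=
  TopologicalSpace.coinduced (colMap A B S hS) inferInstance

lemma continuous_colMap (A B S : Set Xb) (hS : S = A ∪ B) :
    Continuous[_, colTop A B S hS] (colMap A B S hS) :=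
  continuous_coinduced_rng

lemma continuous_some_colTop (A B S : Set Xb) (hS : S = A ∪ B) :
    Continuous[_, colTop A B S hS] (some : {x : Xb // x ∉ S} → Option {x : Xb // x ∉ S}) := by
  rw [continuous_def]
  intro U hU
  rw [colTop, isOpen_coinduced] at hU
  have : some ⁻¹' U = incl A B S hS ⁻¹' (colMap A B S hS ⁻¹' U) := by
    ext x
    simp [colMap_incl A B S hS x]
  rw [this]
  exact hU.preimage (continuous_incl A B S hS)

lemma preimage_some_image (A B S : Set Xb) (hS : S = A ∪ B) (V : Set {x : Xb // x ∉ S}) :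
    colMap A B S hS ⁻¹' (some '' V) = incl A B S hS '' V := by
  ext y
  by_cases h : (y : Xb) ∈ A
  · simp only [Set.mem_preimage, colMap_of_mem A B S hS h]
    constructor
    · rintro ⟨v, -, hv⟩; exact absurd hv (by simp)
    · rintro ⟨x, -, rfl⟩; exact absurd h (not_mem_A A B S hS)
  · simp only [Set.mem_preimage, colMap_of_not_mem A B S hS h]
    constructor
    · rintro ⟨v, hv, hv2⟩
      refine ⟨⟨y.1, not_mem_S_of A B S hS h⟩, ?_, rfl⟩
      obtain rfl : v = ⟨y.1, not_mem_S_of A B S hS h⟩ := by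
        injection hv2
      exact hv
    · rintro ⟨x, hx, rfl⟩
      exact ⟨x, hx, rfl⟩

lemma isOpen_some_image (A B S : Set Xb) (hS : S = A ∪ B) (hA : IsClosed A)
    {V : Set {x : Xb // x ∉ S}} (hV : IsOpen V) :
    IsOpen[colTop A B S hS] (some '' V) := by
  rw [colTop, isOpen_coinduced, preimage_some_image A B S hS]
  exact (isOpenEmbedding_incl A B S hS hA).isOpenMap V hV

lemma isOpenEmbedding_some_colTop (A B S : Set Xb) (hS : S = A ∪ B) (hA : IsClosed A) :
    @IsOpenEmbedding _ _ _ (colTop A B S hS) (some : {x : Xb // x ∉ S} → _) := by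
  letI := colTop A B S hS
  exact IsOpenEmbedding.of_continuous_injective_isOpenMap
    (continuous_some_colTop A B S hS) (Option.some_injective _)
    (fun V hV => isOpen_some_image A B S hS hA hV)

/-- the basic open neighborhoods of the basepoint -/
lemma isOpen_insert_none (A B S : Set Xb) (hS : S = A ∪ B) {V : Set {x : Xb // x ∉ B}}
    (hV : IsOpen V) (hAV : ∀ y : {x : Xb // x ∉ B}, (y : Xb) ∈ A → y ∈ V) :
    IsOpen[colTop A B S hS] (insert none (some '' (incl A B S hS ⁻¹' V))) := by
  rw [colTop, isOpen_coinduced]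
  have : colMap A B S hS ⁻¹' (insert none (some '' (incl A B S hS ⁻¹' V))) = V := by
    ext y
    by_cases h : (y : Xb) ∈ A
    · simp only [Set.mem_preimage, colMap_of_mem A B S hS h]
      simp [hAV y h]
    · simp only [Set.mem_preimage, colMap_of_not_mem A B S hS h, Set.mem_insert_iff,
        reduceCtorEq, false_or, Set.mem_image]
      constructor
      · rintro ⟨x, hx, hx2⟩
        obtain rfl : x = ⟨y.1, not_mem_S_of A B S hS h⟩ := by injection hx2
        exact hx
      · intro hy
        refine ⟨⟨y.1, not_mem_S_of A B S hS h⟩, ?_, rfl⟩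
        exact hy
  rw [this]; exact hV

section CompactBase
variable [CompactSpace Xb] [T2Space Xb]

lemma t2_colTop (A B S : Set Xb) (hS : S = A ∪ B) (hA : IsClosed A) :
    @T2Space _ (colTop A B S hS) := by
  letI := colTop A B S hS
  have sep : ∀ b : {x : Xb // x ∉ S}, ∃ u v : Set (Option {x : Xb // x ∉ S}),
      IsOpen u ∧ IsOpen v ∧ none ∈ u ∧ some b ∈ v ∧ Disjoint u v := by
    intro b
    obtain ⟨O, O', hO, hO', hAO, hbO', hOO'⟩ :=
      normal_separation hA isClosed_singleton
        (Set.disjoint_singleton_right.mpr (not_mem_A A B S hS))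
    refine ⟨insert none (some '' (incl A B S hS ⁻¹' (Subtype.val ⁻¹' O))),
        some '' (Subtype.val ⁻¹' O'), ?_, ?_, Set.mem_insert _ _, ?_, ?_⟩
    · exact isOpen_insert_none A B S hS (hO.preimage continuous_subtype_val)
        (fun y hy => hAO hy)
    · exact isOpen_some_image A B S hS hA (hO'.preimage continuous_subtype_val)
    · exact ⟨b, hbO' rfl, rfl⟩
    · rw [Set.disjoint_left]
      rintro z (rfl | ⟨x, hx, rfl⟩) ⟨w, hw, hzw⟩
      · exact Option.some_ne_none _ hzw
      · obtain rfl : w = x := Option.some_injective _ hzw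
        exact Set.disjoint_left.mp hOO' hx hw
  constructor
  intro x y hxy
  match x, y with
  | none, none => exact absurd rfl hxy
  | none, some b =>
    obtain ⟨u, v, hu, hv, hnu, hbv, huv⟩ := sep b
    exact ⟨u, v, hu, hv, hnu, hbv, huv⟩
  | some a, none =>
    obtain ⟨u, v, hu, hv, hnu, hav, huv⟩ := sep a
    exact ⟨v, u, hv, hu, hav, hnu, huv.symm⟩
  | some a, some b =>
    have hab : a ≠ b := fun h => hxy (by rw [h])
    obtain ⟨u, v, hu, hv, hau, hbv, huv⟩ := t2_separation hab
    exact ⟨some '' u, some '' v, isOpen_some_image A B S hS hA hu,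
      isOpen_some_image A B S hS hA hv, ⟨a, hau, rfl⟩, ⟨b, hbv, rfl⟩,
      (Set.disjoint_image_iff (Option.some_injective _)).mpr huv⟩

lemma exists_compact_nbhd_none (A B S : Set Xb) (hS : S = A ∪ B)
    (hA : IsClosed A) (hB : IsClosed B) (hd : Disjoint A B) :
    ∃ K, @IsCompact _ (colTop A B S hS) K ∧ K ∈ @nhds _ (colTop A B S hS) none := by
  letI := colTop A B S hS
  haveI : LocallyCompactSpace {x : Xb // x ∉ B} := hB.isOpen_compl.locallyCompactSpace
  have hApartC : IsCompact (Subtype.val ⁻¹' A : Set {x : Xb // x ∉ B}) := by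
    have himg : (Subtype.val '' (Subtype.val ⁻¹' A : Set {x : Xb // x ∉ B})) = A := by
      ext z
      constructor
      · rintro ⟨y, hy, rfl⟩; exact hy
      · intro hz; exact ⟨⟨z, fun hb => Set.disjoint_left.mp hd hz hb⟩, hz, rfl⟩
    rw [Subtype.isCompact_iff, himg]
    exact hA.isCompact
  obtain ⟨K₀, hK₀c, hK₀i⟩ := exists_compact_superset hApartC
  refine ⟨insert none (colMap A B S hS '' K₀),
    ((hK₀c.image (continuous_colMap A B S hS))).insert none, ?_⟩
  rw [mem_nhds_iff]
  refine ⟨insert none (some '' (incl A B S hS ⁻¹' interior K₀)), ?_, ?_,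
    Set.mem_insert _ _⟩
  · rintro z (rfl | ⟨x, hx, rfl⟩)
    · exact Set.mem_insert _ _
    · exact Set.mem_insert_of_mem _
        ⟨incl A B S hS x, interior_subset hx, colMap_incl A B S hS x⟩
  · exact isOpen_insert_none A B S hS isOpen_interior (fun y hy => hK₀i hy)

lemma weaklyLocallyCompact_colTop (A B S : Set Xb) (hS : S = A ∪ B)
    (hA : IsClosed A) (hB : IsClosed B) (hd : Disjoint A B) :
    @WeaklyLocallyCompactSpace _ (colTop A B S hS) := by
  letI := colTop A B S hS
  constructor
  intro z
  match z with
  | none => exact exists_compact_nbhd_none A B S hS hA hB hd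
  | some x =>
    haveI : LocallyCompactSpace {x : Xb // x ∉ S} := by
      have : IsOpen Sᶜ := (hS ▸ hA.union hB).isOpen_compl
      exact this.locallyCompactSpace
    obtain ⟨K, hKc, hKn⟩ := exists_compact_mem_nhds x
    refine ⟨some '' K, hKc.image (continuous_some_colTop A B S hS), ?_⟩
    rw [mem_nhds_iff] at hKn ⊢
    obtain ⟨V, hVK, hVo, hxV⟩ := hKn
    exact ⟨some '' V, Set.image_mono hVK,
      isOpen_some_image A B S hS hA hVo, ⟨x, hxV, rfl⟩⟩

lemma locallyCompact_colTop (A B S : Set Xb) (hS : S = A ∪ B)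
    (hA : IsClosed A) (hB : IsClosed B) (hd : Disjoint A B) :
    @LocallyCompactSpace _ (colTop A B S hS) := by
  letI := colTop A B S hS
  haveI := t2_colTop A B S hS hA
  haveI := weaklyLocallyCompact_colTop A B S hS hA hB hd
  infer_instance

/-- The pointed extension given by the collapse topology. -/
noncomputable def colExt (A B S : Set Xb) (hS : S = A ∪ B)
    (hA : IsClosed A) (hB : IsClosed B) (hd : Disjoint A B) :
    PointedExt {x : Xb // x ∉ S} where
  top := colTop A B S hS
  t2 := t2_colTop A B S hS hA
  cg := by
    letI := colTop A B S hS
    haveI := t2_colTop A B S hS hA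
    haveI := weaklyLocallyCompact_colTop A B S hS hA hB hd
    infer_instance
  emb := isOpenEmbedding_some_colTop A B S hS hA

end CompactBase

lemma option_decomp_mem {α : Type*} (U : Set (Option α)) (h : none ∈ U) :
    U = insert none (some '' (some ⁻¹' U)) := by
  ext o
  cases o with
  | none => simpa using h
  | some a => simp

lemma option_decomp_not_mem {α : Type*} (U : Set (Option α)) (h : none ∉ U) :
    U = some '' (some ⁻¹' U) := by
  ext o
  cases o with
  | none => simpa using h
  | some a => simp

lemma plusTop_le_colTop (A B S : Set Xb) (hS : S = A ∪ B) :
    plusTop {x : Xb // x ∉ S} ≤ colTop A B S hS :=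
  continuous_iff_coinduced_le.mp (continuous_some_colTop A B S hS)

lemma mem_insert_none_image_iff (A B S : Set Xb) (hS : S = A ∪ B)
    {V : Set {x : Xb // x ∉ B}} (x : {x : Xb // x ∉ S}) :
    some x ∈ insert none (some '' (incl A B S hS ⁻¹' V)) ↔ incl A B S hS x ∈ V := by
  simp only [Set.mem_insert_iff, reduceCtorEq, false_or, Set.mem_image]
  constructor
  · rintro ⟨y, hy, hyx⟩
    obtain rfl : y = x := Option.some_injective _ hyx
    exact hy
  · intro h; exact ⟨x, h, rfl⟩

section CompactBase2
variable [CompactSpace Xb] [T2Space Xb]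

lemma isOpen_none_inf (A B S : Set Xb) (hS : S = A ∪ B) (hS' : S = B ∪ A)
    (hA : IsClosed A) (hB : IsClosed B) (hd : Disjoint A B) :
    IsOpen[colTop A B S hS ⊓ colTop B A S hS'] {(none : Option {x : Xb // x ∉ S})} := by
  letI := colTop A B S hS ⊓ colTop B A S hS'
  obtain ⟨OA, OB, hOA, hOB, hAOA, hBOB, hdis⟩ := normal_separation hA hB hd
  have h1 : IsOpen[colTop A B S hS ⊓ colTop B A S hS']
      (insert none (some '' (incl A B S hS ⁻¹' (Subtype.val ⁻¹' OA)))) :=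
    (isOpen_insert_none A B S hS (hOA.preimage continuous_subtype_val)
      (fun y hy => hAOA hy)).mono inf_le_left
  have h2 : IsOpen[colTop A B S hS ⊓ colTop B A S hS']
      (insert none (some '' (incl B A S hS' ⁻¹' (Subtype.val ⁻¹' OB)))) :=
    (isOpen_insert_none B A S hS' (hOB.preimage continuous_subtype_val)
      (fun y hy => hBOB hy)).mono inf_le_right
  have heq : ({none} : Set (Option {x : Xb // x ∉ S})) =
      insert none (some '' (incl A B S hS ⁻¹' (Subtype.val ⁻¹' OA))) ∩
      insert none (some '' (incl B A S hS' ⁻¹' (Subtype.val ⁻¹' OB))) := by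
    ext o
    cases o with
    | none => simp
    | some x =>
      simp only [Set.mem_singleton_iff, reduceCtorEq, false_iff, Set.mem_inter_iff, not_and]
      intro hx1 hx2
      rw [mem_insert_none_image_iff] at hx1 hx2
      exact Set.disjoint_left.mp hdis hx1 hx2
  rw [heq]
  exact IsOpen.inter h1 h2

lemma colTop_inf_eq (A B S : Set Xb) (hS : S = A ∪ B) (hS' : S = B ∪ A)
    (hA : IsClosed A) (hB : IsClosed B) (hd : Disjoint A B) :
    colTop A B S hS ⊓ colTop B A S hS' = plusTop {x : Xb // x ∉ S} := by
  apply le_antisymm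
  · rw [← isOpen_implies_isOpen_iff (t₁ := plusTop {x : Xb // x ∉ S})]
    letI := colTop A B S hS ⊓ colTop B A S hS'
    intro U hU
    have hUX : IsOpen (some ⁻¹' U) := by
      rwa [plusTop, isOpen_coinduced] at hU
    have himg : IsOpen[colTop A B S hS ⊓ colTop B A S hS'] (some '' (some ⁻¹' U)) :=
      (isOpen_some_image A B S hS hA hUX).mono inf_le_left
    by_cases hn : none ∈ U
    · rw [option_decomp_mem U hn]
      rw [Set.insert_eq]
      exact (isOpen_none_inf A B S hS hS' hA hB hd).union himg
    · rw [option_decomp_not_mem U hn]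
      exact himg
  · exact le_inf (plusTop_le_colTop A B S hS) (plusTop_le_colTop B A S hS')
end CompactBase2

section Maximality
variable [CompactSpace Xb] [T2Space Xb]

lemma colTop_maximal (A B S : Set Xb) (hS : S = A ∪ B) (hS' : S = B ∪ A)
    (hA : IsClosed A) (hB : IsClosed B) (hd : Disjoint A B)
    (Q : PointedExt {x : Xb // x ∉ S})
    (hQ : colTop A B S hS ⊓ Q.top = plusTop {x : Xb // x ∉ S}) :
    Q.top ≤ colTop B A S hS' := by
  -- extract the separating opens from the pairing hypothesis
  have hsingle : IsOpen[colTop A B S hS ⊓ Q.top] {(none : Option {x : Xb // x ∉ S})} := by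
    rw [hQ, plusTop, isOpen_coinduced]
    have : (some ⁻¹' ({none} : Set (Option {x : Xb // x ∉ S}))) = ∅ := by
      ext x; simp
    rw [this]; exact isOpen_empty
  have hn : ({none} : Set (Option {x : Xb // x ∉ S})) ∈
      @nhds _ (colTop A B S hS ⊓ Q.top) none := by
    letI := colTop A B S hS ⊓ Q.top
    exact hsingle.mem_nhds rfl
  rw [nhds_inf] at hn
  obtain ⟨sA, hsA, sQ, hsQ, hseq⟩ := Filter.mem_inf_iff.mp hn
  obtain ⟨A', hA'sub, hA'open, hA'none⟩ :
      ∃ t ⊆ sA, IsOpen[colTop A B S hS] t ∧ none ∈ t := by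
    letI := colTop A B S hS
    exact mem_nhds_iff.mp hsA
  obtain ⟨B', hB'sub, hB'open, hB'none⟩ :
      ∃ t ⊆ sQ, IsOpen[Q.top] t ∧ none ∈ t := by
    letI := Q.top
    exact mem_nhds_iff.mp hsQ
  have hAB' : ∀ z, z ∈ A' → z ∈ B' → z = none := by
    intro z h1 h2
    have : z ∈ sA ∩ sQ := ⟨hA'sub h1, hB'sub h2⟩
    rw [← hseq] at this
    exact this
  -- now prove the topology inequality
  rw [← isOpen_implies_isOpen_iff (t₁ := colTop B A S hS')]
  intro U hU
  have hWopen : IsOpen (some ⁻¹' U) := by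
    letI := colTop B A S hS'
    exact (continuous_some_colTop B A S hS').isOpen_preimage U hU
  letI := Q.top
  haveI := Q.t2
  haveI := Q.cg
  by_cases hnU : none ∈ U
  · -- the basepoint case: use compact generation
    set W : Set {x : Xb // x ∉ S} := some ⁻¹' U with hWdef
    have hGA : IsOpen (colMap A B S hS ⁻¹' A') := by
      rw [colTop, isOpen_coinduced] at hA'open; exact hA'open
    have hGB : IsOpen (colMap B A S hS' ⁻¹' U) := by
      rw [colTop, isOpen_coinduced] at hU; exact hU
    set OA : Set Xb := Subtype.val '' (colMap A B S hS ⁻¹' A') with hOAdef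
    set OB : Set Xb := Subtype.val '' (colMap B A S hS' ⁻¹' U) with hOBdef
    have hOAopen : IsOpen OA := hB.isOpen_compl.isOpenMap_subtype_val _ hGA
    have hOBopen : IsOpen OB := hA.isOpen_compl.isOpenMap_subtype_val _ hGB
    set C₀ : Set Xb := (OA ∪ OB)ᶜ with hC₀def
    have hC₀cpt : IsCompact C₀ := ((hOAopen.union hOBopen).isClosed_compl).isCompact
    have hSsub : S ⊆ OA ∪ OB := by
      intro x hx
      rw [hS] at hx
      rcases hx with hx | hx
      · left
        have hxB : x ∉ B := fun hb => Set.disjoint_left.mp hd hx hb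
        refine ⟨⟨x, hxB⟩, ?_, rfl⟩
        show colMap A B S hS ⟨x, hxB⟩ ∈ A'
        rw [colMap_of_mem A B S hS hx]
        exact hA'none
      · right
        have hxA : x ∉ A := fun ha => Set.disjoint_left.mp hd ha hx
        refine ⟨⟨x, hxA⟩, ?_, rfl⟩
        show colMap B A S hS' ⟨x, hxA⟩ ∈ U
        rw [colMap_of_mem B A S hS' hx]
        exact hnU
    have hC₀S : C₀ ⊆ Sᶜ := fun x hx hxS => hx (hSsub hxS)
    have hSXcpt : IsCompact (Subtype.val ⁻¹' C₀ : Set {x : Xb // x ∉ S}) := by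
      have himg : (Subtype.val '' (Subtype.val ⁻¹' C₀ : Set {x : Xb // x ∉ S})) = C₀ := by
        ext z
        constructor
        · rintro ⟨y, hy, rfl⟩; exact hy
        · intro hz; exact ⟨⟨z, hC₀S hz⟩, hz, rfl⟩
      rw [Subtype.isCompact_iff, himg]
      exact hC₀cpt
    have hSX : IsCompact (some '' (Subtype.val ⁻¹' C₀ : Set {x : Xb // x ∉ S})) :=
      hSXcpt.image Q.emb.continuous
    -- compact generation
    apply CompactlyGeneratedSpace.isOpen'
    intro Kt _ _ _ f hf
    have hKcpt : IsCompact (Set.range f) := isCompact_range hf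
    have hD : IsCompact (Set.range f \ B') := hKcpt.diff hB'open
    set T : Set (Option {x : Xb // x ∉ S}) :=
      (Set.range f \ B') ∪ some '' (Subtype.val ⁻¹' C₀) with hTdef
    have hTcpt : IsCompact T := hD.union hSX
    have hTrange : T ⊆ Set.range some := by
      rintro z (⟨hz1, hz2⟩ | ⟨x, _, rfl⟩)
      · rcases z with _ | x
        · exact absurd hB'none hz2
        · exact ⟨x, rfl⟩
      · exact ⟨x, rfl⟩
    have hT'img : some '' (some ⁻¹' T) = T := by
      rw [Set.image_preimage_eq_inter_range, Set.inter_eq_left]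
      exact hTrange
    have hT'cpt : IsCompact (some ⁻¹' T) :=
      Q.emb.isEmbedding.isCompact_iff.mpr (by rw [hT'img]; exact hTcpt)
    set M : Set (Option {x : Xb // x ∉ S}) := some '' (some ⁻¹' T \ W) with hMdef
    have hMcpt : IsCompact M := (hT'cpt.diff hWopen).image Q.emb.continuous
    have hMclosed : IsClosed M := hMcpt.isClosed
    have key : f ⁻¹' U = f ⁻¹' Mᶜ := by
      ext k
      simp only [Set.mem_preimage, Set.mem_compl_iff]
      constructor
      · intro hk hM
        obtain ⟨x, ⟨hxT, hxW⟩, hsome⟩ := hM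
        rw [← hsome] at hk
        exact hxW hk
      · intro hk
        by_contra hkU
        have hKk : f k ∈ Set.range f := ⟨k, rfl⟩
        have hne : f k ≠ none := fun h => hkU (h ▸ hnU)
        obtain ⟨x, hx⟩ := Option.ne_none_iff_exists.mp hne
        have hxW : x ∉ W := fun hw => hkU (hx ▸ hw)
        have hxT : some x ∈ T := by
          by_cases hkB : f k ∈ B'
          · right
            refine ⟨x, ?_, rfl⟩
            show (x : Xb) ∈ C₀
            rintro (⟨y, hyGA, hyval⟩ | ⟨y, hyGB, hyval⟩)
            · have hyA : (y : Xb) ∉ A := by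
                rw [hyval]; exact not_mem_A A B S hS
              have h1 : colMap A B S hS y = some x := by
                rw [colMap_of_not_mem A B S hS hyA]
                exact congrArg some (Subtype.ext hyval)
              have h2 : some x ∈ A' := h1 ▸ hyGA
              have h3 : some x ∈ B' := hx ▸ hkB
              exact Option.some_ne_none _ (hAB' (some x) h2 h3)
            · have hyB : (y : Xb) ∉ B := by
                rw [hyval]
                exact not_mem_A B A S hS'
              have h1 : colMap B A S hS' y = some x := by
                rw [colMap_of_not_mem B A S hS' hyB]
                exact congrArg some (Subtype.ext hyval)
              have h2 : some x ∈ U := h1 ▸ hyGB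
              exact hkU (hx ▸ h2)
          · left
            exact hx ▸ ⟨hKk, hkB⟩
        exact hk ⟨x, ⟨hxT, hxW⟩, hx⟩
    rw [key]
    exact hMclosed.isOpen_compl.preimage hf
  · -- basepoint not in `U`
    rw [option_decomp_not_mem U hnU]
    exact Q.emb.isOpenMap _ hWopen

end Maximality

lemma collapseL_eq (L R : Set Xb) : collapseL L R = colMap L R (L ∪ R) rfl := rfl

lemma collapseR_eq (L R : Set Xb) :
    collapseR L R = colMap R L (L ∪ R) (Set.union_comm L R) := rfl

/-- Let `X̄` be compact Hausdorff and `∂_L, ∂_R ⊆ X̄` disjoint closed subsets;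
set `X := X̄ ∖ (∂_L ∪ ∂_R)`.  Then the quotients `X_∗ := (X̄ ∖ ∂_R)/∂_L` and
`X_∗^¬ := (X̄ ∖ ∂_L)/∂_R` (with their quotient topologies) are pointed extensions of `X`
which are well-pointed — each is locally compact Hausdorff with `X` open and `∗` admitting a
compact neighborhood — and they are each other's negations (the canonical map
`X₊ → X_∗ ×_{X⁺} X_∗^¬` is a homeomorphism and each is maximal with this property
relative to the other). -/
theorem quotient_mutual_negation [CompactSpace Xb] [T2Space Xb]
    (L R : Set Xb) (hL : IsClosed L) (hR : IsClosed R) (hd : Disjoint L R) :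
    ∃ PL PR : PointedExt {x : Xb // x ∉ L ∪ R},
      PL.top = TopologicalSpace.coinduced (collapseL L R) inferInstance ∧
      PR.top = TopologicalSpace.coinduced (collapseR L R) inferInstance ∧
      @LocallyCompactSpace _ PL.top ∧ @LocallyCompactSpace _ PR.top ∧
      (∃ K : Set (Option {x : Xb // x ∉ L ∪ R}),
        @IsCompact _ PL.top K ∧ none ∈ @interior _ PL.top K) ∧
      (∃ K : Set (Option {x : Xb // x ∉ L ∪ R}),
        @IsCompact _ PR.top K ∧ none ∈ @interior _ PR.top K) ∧
      IsNegation PL PR ∧ IsNegation PR PL := by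
  have hS2 : (L ∪ R : Set Xb) = R ∪ L := Set.union_comm L R
  refine ⟨colExt L R (L ∪ R) rfl hL hR hd, colExt R L (L ∪ R) hS2 hR hL hd.symm,
    rfl, rfl, locallyCompact_colTop L R (L ∪ R) rfl hL hR hd,
    locallyCompact_colTop R L (L ∪ R) hS2 hR hL hd.symm, ?_, ?_, ?_, ?_⟩
  · obtain ⟨K, h1, h2⟩ := exists_compact_nbhd_none L R (L ∪ R) rfl hL hR hd
    refine ⟨K, h1, ?_⟩
    letI := colTop L R (L ∪ R) rfl
    exact mem_interior_iff_mem_nhds.mpr h2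
  · obtain ⟨K, h1, h2⟩ := exists_compact_nbhd_none R L (L ∪ R) hS2 hR hL hd.symm
    refine ⟨K, h1, ?_⟩
    letI := colTop R L (L ∪ R) hS2
    exact mem_interior_iff_mem_nhds.mpr h2
  · exact ⟨colTop_inf_eq L R (L ∪ R) rfl hS2 hL hR hd,
      fun Q hQ => colTop_maximal L R (L ∪ R) rfl hS2 hL hR hd Q hQ⟩
  · exact ⟨colTop_inf_eq R L (L ∪ R) hS2 rfl hR hL hd.symm,
      fun Q hQ => colTop_maximal R L (L ∪ R) hS2 rfl hR hL hd.symm Q hQ⟩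
end

section
/- Negation of zero-pointed embeddings: given well-pointed extensions X_∗, Y_∗ of locally compact Hausdorff spaces X, Y, every zero-pointed embedding f : X_∗ → Y_∗ induces a zero-pointed embedding f^¬ : Y_∗^¬ → X_∗^¬, defined on underlying sets by sending y ∈ Y to x if f(x) = y for (the unique) x ∈ X, and to ∗ ∈ X_∗^¬ if y is not in the image of f restricted to f⁻¹Y; moreover (g∘f)^¬ = f^¬ ∘ g^¬ and (id)^¬ = id, and f^¬¬ = f under the identifications X_∗ ≅ X_∗^¬¬, Y_∗ ≅ Y_∗^¬¬. -/
open Topology TopologicalSpace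

/-- The restriction of a based map `f : X_∗ → Y_∗` to `f⁻¹Y → Y`. -/
def zRestrict {X Y : Type u} (f : Option X → Option Y) :
    {x : X // (f (some x)).isSome} → Y :=
  fun p => (f (some p.1)).get p.2

/-- A *zero-pointed embedding* `f : X_∗ → Y_∗`: a continuous based map whose restriction
`f⁻¹Y → Y` is an open embedding. -/
def IsZPEmb {X Y : Type u} [TopologicalSpace X] [TopologicalSpace Y]
    (P : PointedExt X) (Q : PointedExt Y) (f : Option X → Option Y) : Prop :=
  Continuous[P.top, Q.top] f ∧ f none = none ∧ IsOpenEmbedding (zRestrict f)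

open Classical in
/-- The negation `f^¬ : Y_∗^¬ → X_∗^¬` of a based map `f : X_∗ → Y_∗`: it sends `y ∈ Y` to
`x` if `f x = y` for (the unique) `x ∈ X`, and to `∗` if `y` is not in the image of the
restriction of `f` to `f⁻¹Y`. -/
noncomputable def zNeg {X Y : Type u} (f : Option X → Option Y) : Option Y → Option X :=
  fun b => if h : b ≠ none ∧ ∃ x : X, f (some x) = b then some h.2.choose else none

/-! ### Auxiliary machinery -/

namespace ZNegFunctorial

open Set Function

universe v

section OptionSets

variable {X : Type v}

lemma none_notMem_image (T : Set X) : (none : Option X) ∉ some '' T := by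
  rintro ⟨x, -, hx⟩; exact Option.some_ne_none x hx

lemma preimage_image_some (T : Set X) : some ⁻¹' (some '' T) = T :=
  Set.preimage_image_eq T (Option.some_injective X)

lemma eq_image_preimage {s : Set (Option X)} (hn : none ∉ s) :
    s = some '' (some ⁻¹' s) := by
  ext b
  cases b with
  | none => simp [hn, none_notMem_image]
  | some x =>
    simp only [Set.mem_image, Set.mem_preimage]
    exact ⟨fun h => ⟨x, h, rfl⟩, by rintro ⟨y, hy, h⟩; rwa [← Option.some_injective X h]⟩

lemma preimage_insert_none (t : Set (Option X)) :
    some ⁻¹' (insert none t) = some ⁻¹' t := by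
  ext x; simp [Option.some_ne_none]

lemma compl_insert_none_image (T : Set X) :
    (insert none (some '' T))ᶜ = some '' Tᶜ := by
  ext b
  cases b with
  | none => simp
  | some x =>
    simp only [Set.mem_compl_iff, Set.mem_insert_iff, Set.mem_image]
    constructor
    · intro h
      refine ⟨x, fun hxT => h (Or.inr ⟨x, hxT, rfl⟩), rfl⟩
    · rintro ⟨y, hy, heq⟩
      cases Option.some_injective X heq
      rintro (h | ⟨z, hz, hzeq⟩)
      · exact Option.some_ne_none _ h
      · exact hy (by rwa [← Option.some_injective X hzeq])

end OptionSets

section Ext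

variable {X : Type v} [TopologicalSpace X]

lemma isOpen_plusTop {s : Set (Option X)} : IsOpen[plusTop X] s ↔ IsOpen (some ⁻¹' s) :=
  isOpen_coinduced

/-- traces of opens of a pointed extension are open -/
lemma ext_cont (E : PointedExt X) : Continuous[_, E.top] some := by
  letI := E.top; exact E.emb.continuous

lemma ext_openMap (E : PointedExt X) : @IsOpenMap X (Option X) _ E.top some := by
  letI := E.top; exact E.emb.isOpenMap

lemma ext_trace (E : PointedExt X) {s : Set (Option X)} (hs : IsOpen[E.top] s) :
    IsOpen (some ⁻¹' s) := by
  letI := E.top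
  exact (ext_cont E).isOpen_preimage s hs

/-- lift an `X`-open set missing the basepoint -/
lemma ext_lift (E : PointedExt X) {s : Set (Option X)} (hn : none ∉ s)
    (hs : IsOpen (some ⁻¹' s)) : IsOpen[E.top] s := by
  rw [eq_image_preimage hn]
  exact ext_openMap E _ hs

lemma ext_lift' (E : PointedExt X) {T : Set X} (hT : IsOpen T) :
    IsOpen[E.top] (some '' T) := by
  apply ext_lift E (none_notMem_image T)
  rwa [preimage_image_some]

/-- extraction of a basic pair witness from `Pairs` -/
lemma pairs_basic {P Q : PointedExt X} (h : Pairs P Q) :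
    ∃ A B : Set (Option X), IsOpen[P.top] A ∧ IsOpen[Q.top] B ∧ none ∈ A ∧ none ∈ B ∧
      A ∩ B = {none} := by
  have h0 : IsOpen[plusTop X] {(none : Option X)} := by
    rw [isOpen_plusTop]
    have he : (some ⁻¹' ({none} : Set (Option X))) = (∅ : Set X) := by
      ext x; simp
    rw [he]; exact isOpen_empty
  have h1 : IsOpen[P.top ⊓ Q.top] {(none : Option X)} := by rw [h]; exact h0
  have h2 : {(none : Option X)} ∈ @nhds (Option X) (P.top ⊓ Q.top) none := by
    letI := P.top ⊓ Q.top
    exact h1.mem_nhds rfl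
  have h3 : @nhds (Option X) (P.top ⊓ Q.top) none =
      @nhds (Option X) P.top none ⊓ @nhds (Option X) Q.top none :=
    (gc_nhds (none : Option X)).u_inf (b₁ := P.top)
  rw [h3] at h2
  obtain ⟨t₁, ht₁, t₂, ht₂, hI⟩ := Filter.mem_inf_iff.mp h2
  obtain ⟨A, hAsub, hAopen, hAmem⟩ : ∃ A ⊆ t₁, IsOpen[P.top] A ∧ none ∈ A := by
    letI := P.top; exact mem_nhds_iff.mp ht₁
  obtain ⟨B, hBsub, hBopen, hBmem⟩ : ∃ B ⊆ t₂, IsOpen[Q.top] B ∧ none ∈ B := by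
    letI := Q.top; exact mem_nhds_iff.mp ht₂
  refine ⟨A, B, hAopen, hBopen, hAmem, hBmem, ?_⟩
  apply Set.Subset.antisymm
  · intro b hb
    rw [hI]
    exact ⟨hAsub hb.1, hBsub hb.2⟩
  · intro b hb
    obtain rfl : b = none := hb
    exact ⟨hAmem, hBmem⟩

end Ext

end ZNegFunctorial
namespace ZNegFunctorial

open Set Function

universe v

section CP

variable {X : Type v} [TopologicalSpace X] [T2Space X] [LocallyCompactSpace X]

/-- the "one-point absorption of the closed set `M`" topology on `Option X` -/
def cpTop (M : Set X) : TopologicalSpace (Option X) where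
  IsOpen s := IsOpen (some ⁻¹' s) ∧ (none ∈ s → ∃ K : Set X, IsCompact K ∧ M \ K ⊆ some ⁻¹' s)
  isOpen_univ := ⟨by simpa using isOpen_univ, fun _ => ⟨∅, isCompact_empty, by simp⟩⟩
  isOpen_inter s t hs ht := by
    refine ⟨hs.1.inter ht.1, fun hn => ?_⟩
    obtain ⟨K1, hK1, hM1⟩ := hs.2 hn.1
    obtain ⟨K2, hK2, hM2⟩ := ht.2 hn.2
    exact ⟨K1 ∪ K2, hK1.union hK2, fun x hx =>
      ⟨hM1 ⟨hx.1, fun h => hx.2 (Or.inl h)⟩, hM2 ⟨hx.1, fun h => hx.2 (Or.inr h)⟩⟩⟩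
  isOpen_sUnion S hS := by
    constructor
    · rw [Set.preimage_sUnion]
      exact isOpen_biUnion fun t ht => (hS t ht).1
    · rintro ⟨t, htS, hnt⟩
      obtain ⟨K, hK, hM⟩ := (hS t htS).2 hnt
      exact ⟨K, hK, fun x hx => ⟨t, htS, hM hx⟩⟩

lemma cp_isOpen_iff {M : Set X} {s : Set (Option X)} :
    IsOpen[cpTop M] s ↔
      IsOpen (some ⁻¹' s) ∧ (none ∈ s → ∃ K : Set X, IsCompact K ∧ M \ K ⊆ some ⁻¹' s) :=
  Iff.rfl

lemma cp_cont (M : Set X) : Continuous[_, cpTop M] some := by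
  rw [continuous_def]
  exact fun s hs => hs.1

lemma cp_lift {M : Set X} {s : Set (Option X)} (hn : none ∉ s) (hs : IsOpen (some ⁻¹' s)) :
    IsOpen[cpTop M] s :=
  ⟨hs, fun h => absurd h hn⟩

lemma cp_emb (M : Set X) : @IsOpenEmbedding X (Option X) _ (cpTop M) some := by
  letI := cpTop M
  refine IsOpenEmbedding.of_continuous_injective_isOpenMap (cp_cont M)
    (Option.some_injective X) (fun O hO => ?_)
  refine cp_lift (none_notMem_image O) ?_
  rwa [preimage_image_some]

lemma cp_t2 (M : Set X) : @T2Space (Option X) (cpTop M) := by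
  letI := cpTop M
  constructor
  have key : ∀ x : X, ∃ u v : Set (Option X),
      IsOpen u ∧ IsOpen v ∧ (none : Option X) ∈ u ∧ some x ∈ v ∧ Disjoint u v := by
    intro x
    obtain ⟨K, hK, hKx⟩ := exists_compact_mem_nhds x
    refine ⟨insert none (some '' Kᶜ), some '' (interior K), ?_, ?_, ?_, ?_, ?_⟩
    · refine ⟨?_, fun _ => ⟨K, hK, ?_⟩⟩
      · rw [preimage_insert_none, preimage_image_some]
        exact hK.isClosed.isOpen_compl
      · rw [preimage_insert_none, preimage_image_some]
        exact fun z hz => hz.2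
    · exact cp_lift (none_notMem_image _) (by rw [preimage_image_some]; exact isOpen_interior)
    · exact Set.mem_insert _ _
    · exact ⟨x, mem_interior_iff_mem_nhds.mpr hKx, rfl⟩
    · rw [Set.disjoint_left]
      rintro b (rfl | ⟨z, hz, rfl⟩)
      · exact fun hb => none_notMem_image _ hb
      · rintro ⟨w, hw, hweq⟩
        cases Option.some_injective X hweq
        exact hz (interior_subset hw)
  intro a b hab
  cases a with
  | none =>
    cases b with
    | none => exact absurd rfl hab
    | some x =>
      obtain ⟨u, v, hu, hv, hnu, hxv, huv⟩ := key x
      exact ⟨u, v, hu, hv, hnu, hxv, huv⟩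
  | some x =>
    cases b with
    | none =>
      obtain ⟨u, v, hu, hv, hnu, hxv, huv⟩ := key x
      exact ⟨v, u, hv, hu, hxv, hnu, huv.symm⟩
    | some y =>
      have hxy : x ≠ y := fun h => hab (by rw [h])
      obtain ⟨u, v, hu, hv, hxu, hyv, huv⟩ := t2_separation hxy
      refine ⟨some '' u, some '' v, cp_lift (none_notMem_image _) (by rwa [preimage_image_some]),
        cp_lift (none_notMem_image _) (by rwa [preimage_image_some]),
        ⟨x, hxu, rfl⟩, ⟨y, hyv, rfl⟩, ?_⟩
      rw [Set.disjoint_left]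
      rintro b ⟨z, hz, rfl⟩ ⟨w, hw, hweq⟩
      cases Option.some_injective X hweq
      exact Set.disjoint_left.mp huv hz hw

/-- compactness of `{none} ∪ T` in `cpTop M` for closed `T ⊆ M` -/
lemma cp_compact_insert {M T : Set X} (hT : IsClosed T) (hTM : T ⊆ M) :
    @IsCompact (Option X) (cpTop M) (insert none (some '' T)) := by
  letI := cpTop M
  apply isCompact_of_finite_subcover
  intro ι U hUo hUc
  classical
  obtain ⟨i₀, hi₀⟩ : ∃ i, (none : Option X) ∈ U i := by
    have := hUc (Set.mem_insert _ _)
    simpa using this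
  obtain ⟨K₀, hK₀, hMK₀⟩ := (hUo i₀).2 hi₀
  have hTK : IsCompact (T ∩ K₀) := hK₀.inter_left hT
  have hTKc : T ∩ K₀ ⊆ ⋃ i, some ⁻¹' U i := by
    intro x hx
    have : some x ∈ ⋃ i, U i := hUc (Set.mem_insert_of_mem _ ⟨x, hx.1, rfl⟩)
    simpa using this
  obtain ⟨t, ht⟩ := hTK.elim_finite_subcover (fun i => some ⁻¹' U i) (fun i => (hUo i).1) hTKc
  refine ⟨insert i₀ t, ?_⟩
  rintro b (rfl | ⟨x, hx, rfl⟩)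
  · exact Set.mem_biUnion (Finset.mem_insert_self _ _) hi₀
  · by_cases hxK : x ∈ K₀
    · obtain ⟨i, hi, hxi⟩ := Set.mem_iUnion₂.mp (ht ⟨hx, hxK⟩)
      exact Set.mem_biUnion (Finset.mem_insert_of_mem hi) hxi
    · exact Set.mem_biUnion (Finset.mem_insert_self _ _) (hMK₀ ⟨hTM hx, hxK⟩)

lemma cp_cg {M : Set X} (hM : IsClosed M) : @CompactlyGeneratedSpace (Option X) (cpTop M) := by
  letI := cpTop M
  haveI := cp_t2 (X := X) M
  apply compactlyGeneratedSpace_of_isClosed_of_t2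
  intro s hs
  have htr : IsClosed (some ⁻¹' s) := by
    apply CompactlyGeneratedSpace.isClosed
    intro K hK
    have h1 : IsClosed (s ∩ some '' K) := hs _ (hK.image (cp_cont M))
    have h2 : IsClosed (some ⁻¹' (s ∩ some '' K)) := h1.preimage (cp_cont M)
    rwa [Set.preimage_inter, preimage_image_some] at h2
  by_cases hn : none ∈ s
  · rw [← isOpen_compl_iff]
    have hc : sᶜ = some '' (some ⁻¹' s)ᶜ := by
      have h0 : none ∉ sᶜ := fun h => h hn
      rw [eq_image_preimage h0]
      rfl
    rw [hc]
    exact cp_lift (none_notMem_image _) (by rw [preimage_image_some]; exact htr.isOpen_compl)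
  · set T := M ∩ some ⁻¹' s with hT
    have hTclosed : IsClosed T := hM.inter htr
    have hL := cp_compact_insert (M := M) hTclosed Set.inter_subset_left
    have h3 : IsClosed (s ∩ insert none (some '' T)) := hs _ hL
    have h4 : s ∩ insert none (some '' T) = some '' T := by
      apply Set.Subset.antisymm
      · rintro b ⟨hbs, (rfl | hb)⟩
        · exact absurd hbs hn
        · exact hb
      · rintro b ⟨x, hx, rfl⟩
        exact ⟨hx.2, Set.mem_insert_of_mem _ ⟨x, hx, rfl⟩⟩
    rw [h4] at h3
    have h5 : IsOpen[cpTop M] (some '' T)ᶜ := h3.isOpen_compl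
    obtain ⟨K, hK, hMK⟩ := h5.2 (fun h => none_notMem_image T h)
    rw [← isOpen_compl_iff]
    refine ⟨htr.isOpen_compl, fun _ => ⟨K, hK, ?_⟩⟩
    intro x hx
    intro hxs
    have hxT : x ∈ T := ⟨hx.1, hxs⟩
    exact (hMK hx) ⟨x, hxT, rfl⟩

/-- the pointed extension absorbing the closed set `M` at the basepoint -/
def ClosedPartner (M : Set X) (hM : IsClosed M) : PointedExt X where
  top := cpTop M
  t2 := cp_t2 M
  cg := cp_cg hM
  emb := cp_emb M

lemma pairs_closedPartner (P : PointedExt X) {M : Set X} (hM : IsClosed M)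
    {A : Set (Option X)} (hA : IsOpen[P.top] A) (hnA : none ∈ A)
    {Bt : Set X} (hBt : IsOpen Bt) (hMB : M ⊆ Bt) (hdisj : ∀ x ∈ Bt, some x ∉ A) :
    Pairs P (ClosedPartner M hM) := by
  have hBopen : IsOpen[cpTop M] (insert none (some '' Bt)) := by
    refine cp_isOpen_iff.mpr ⟨?_, fun _ => ⟨∅, isCompact_empty, ?_⟩⟩
    · rwa [preimage_insert_none, preimage_image_some]
    · rw [preimage_insert_none, preimage_image_some]
      simpa using hMB
  have hAB : A ∩ insert none (some '' Bt) = {none} := by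
    apply Set.Subset.antisymm
    · rintro b ⟨hbA, (rfl | ⟨x, hx, rfl⟩)⟩
      · rfl
      · exact absurd hbA (hdisj x hx)
    · rintro b rfl
      exact ⟨hnA, Set.mem_insert _ _⟩
  show P.top ⊓ (ClosedPartner M hM).top = plusTop X
  apply le_antisymm
  · rw [← isOpen_implies_isOpen_iff]
    intro W hW
    letI := P.top ⊓ (ClosedPartner M hM).top
    have hWt : IsOpen (some ⁻¹' W) := isOpen_plusTop.mp hW
    by_cases hn : none ∈ W
    · have hWeq : W = (A ∩ insert none (some '' Bt)) ∪ (W \ {none}) := by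
        apply Set.Subset.antisymm
        · intro b hb
          by_cases hbn : b = none
          · subst hbn; left; rw [hAB]; rfl
          · exact Or.inr ⟨hb, hbn⟩
        · rintro b (hb | hb)
          · rw [hAB] at hb; obtain rfl : b = none := hb; exact hn
          · exact hb.1
      rw [hWeq]
      apply IsOpen.union
      · exact (hA.mono inf_le_left).inter (hBopen.mono inf_le_right)
      · refine IsOpen.mono (t₂ := P.top) ?_ inf_le_left
        refine ext_lift P (fun h => h.2 rfl) ?_
        have : some ⁻¹' (W \ {none}) = some ⁻¹' W := by
          ext x; simp [Option.some_ne_none]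
        rwa [this]
    · refine IsOpen.mono (t₂ := P.top) (ext_lift P hn hWt) inf_le_left
  · refine le_inf ?_ ?_ <;> rw [← isOpen_implies_isOpen_iff] <;> intro s hs <;>
      rw [isOpen_plusTop]
    · exact ext_trace P hs
    · exact hs.1

end CP

end ZNegFunctorial
namespace ZNegFunctorial

open Set Function

universe v

section ZNegPure

variable {X Y : Type v} {f : Option X → Option Y}

lemma zNeg_none' (f : Option X → Option Y) : zNeg f none = none :=
  dif_neg (fun h => h.1 rfl)

lemma f_some_eq (p : {x : X // (f (some x)).isSome}) :
    f (some ↑p) = some (zRestrict f p) :=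
  (Option.some_get p.2).symm

/-- any value of `zNeg f` of the form `some x` pulls back: `f (some x) = b` -/
lemma zNeg_eq_some {b : Option Y} {x : X} (h : zNeg f b = some x) : f (some x) = b := by
  unfold zNeg at h
  split at h
  · rename_i hex
    cases Option.some_injective X h
    exact hex.2.choose_spec
  · exact absurd h (by simp)

/-- if `x` is the unique preimage then `zNeg f b = some x` -/
lemma zNeg_eq_some_of {b : Option Y} {x : X} (hb : b ≠ none)
    (hx : f (some x) = b) (huniq : ∀ a, f (some a) = b → a = x) :
    zNeg f b = some x := by
  have hex : b ≠ none ∧ ∃ a, f (some a) = b := ⟨hb, x, hx⟩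
  unfold zNeg
  rw [dif_pos hex]
  exact congrArg some (huniq _ hex.2.choose_spec)

/-- injectivity of the restriction transfers to uniqueness of `some`-preimages -/
lemma f_some_inj (hinj : Injective (zRestrict f)) {a b : X} {y : Y}
    (ha : f (some a) = some y) (hb : f (some b) = some y) : a = b := by
  have has : (f (some a)).isSome := by rw [ha]; rfl
  have hbs : (f (some b)).isSome := by rw [hb]; rfl
  have h1 : zRestrict f ⟨a, has⟩ = y := by
    have := f_some_eq (f := f) ⟨a, has⟩
    rw [ha] at this
    exact (Option.some_injective Y this.symm)
  have h2 : zRestrict f ⟨b, hbs⟩ = y := by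
    have := f_some_eq (f := f) ⟨b, hbs⟩
    rw [hb] at this
    exact (Option.some_injective Y this.symm)
  have := hinj (h1.trans h2.symm)
  exact congrArg Subtype.val this

lemma zNeg_some_unique (hinj : Injective (zRestrict f)) {x : X} {y : Y}
    (h : f (some x) = some y) : zNeg f (some y) = some x :=
  zNeg_eq_some_of (Option.some_ne_none y) h (fun a ha => f_some_inj hinj ha h)

lemma zNeg_some_not {y : Y} (h : ∀ p : {x : X // (f (some x)).isSome}, zRestrict f p ≠ y) :
    zNeg f (some y) = none := by
  apply dif_neg
  rintro ⟨-, x, hx⟩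
  have hxs : (f (some x)).isSome := by rw [hx]; rfl
  refine h ⟨x, hxs⟩ ?_
  have := f_some_eq (f := f) ⟨x, hxs⟩
  rw [hx] at this
  exact Option.some_injective Y this.symm

lemma zNeg_restrict_key (q : {y : Y // (zNeg f (some y)).isSome}) :
    f (some (zRestrict (zNeg f) q)) = some ↑q :=
  zNeg_eq_some (Option.some_get q.2).symm

lemma zNeg_restrict_inj : Injective (zRestrict (zNeg f)) := by
  intro q q' h
  have h1 := zNeg_restrict_key q
  have h2 := zNeg_restrict_key q'
  rw [h] at h1
  exact Subtype.ext (Option.some_injective Y (h1.symm.trans h2))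

/-- conjunct 4 -/
lemma zNeg_zNeg (hinj : Injective (zRestrict f)) (hfn : f none = none) :
    zNeg (zNeg f) = f := by
  funext b
  cases b with
  | none => rw [zNeg_none', hfn]
  | some x =>
    cases hfx : f (some x) with
    | none =>
      apply dif_neg
      rintro ⟨-, y, hy⟩
      have := zNeg_eq_some hy
      rw [hfx] at this
      exact Option.some_ne_none y this.symm
    | some y =>
      refine zNeg_eq_some_of (Option.some_ne_none x) ?_ ?_
      · exact zNeg_some_unique hinj hfx
      · intro a ha
        have := zNeg_eq_some ha
        exact Option.some_injective Y (this.symm.trans hfx)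

/-- conjunct 3 -/
lemma zNeg_id : zNeg (id : Option X → Option X) = id := by
  funext b
  cases b with
  | none => exact zNeg_none' id
  | some x =>
    refine zNeg_eq_some_of (Option.some_ne_none x) rfl ?_
    intro a ha
    exact Option.some_injective X ha

/-- conjunct 2 -/
lemma zNeg_comp {Z : Type v} {g : Option Y → Option Z}
    (hfinj : Injective (zRestrict f)) (hginj : Injective (zRestrict g))
    (hfn : f none = none) (hgn : g none = none) :
    zNeg (g ∘ f) = zNeg f ∘ zNeg g := by
  funext b
  cases b with
  | none => simp [zNeg_none']
  | some z =>
    by_cases hL : ∃ x, g (f (some x)) = some z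
    · obtain ⟨x₀, hx₀⟩ := hL
      cases hfx : f (some x₀) with
      | none => rw [hfx, hgn] at hx₀; exact absurd hx₀ (by simp)
      | some y₀ =>
        have hgy : g (some y₀) = some z := by rw [← hfx]; exact hx₀
        have huniq : ∀ a, (g ∘ f) (some a) = some z → a = x₀ := by
          intro a ha
          cases hfa : f (some a) with
          | none =>
            rw [Function.comp_apply, hfa, hgn] at ha
            exact absurd ha (by simp)
          | some u =>
            have hgu : g (some u) = some z := by rw [← hfa]; exact ha
            have : u = y₀ := f_some_inj hginj hgu hgy
            rw [this] at hfa
            exact f_some_inj hfinj hfa hfx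
        have hLHS : zNeg (g ∘ f) (some z) = some x₀ :=
          zNeg_eq_some_of (Option.some_ne_none z) hx₀ huniq
        have hg1 : zNeg g (some z) = some y₀ :=
          zNeg_some_unique hginj hgy
        have hf1 : zNeg f (some y₀) = some x₀ :=
          zNeg_some_unique hfinj hfx
        rw [hLHS, Function.comp_apply, hg1, hf1]
    · have hLHS : zNeg (g ∘ f) (some z) = none := by
        apply dif_neg
        rintro ⟨-, x, hx⟩
        exact hL ⟨x, hx⟩
      rw [hLHS, Function.comp_apply]
      cases hgz : zNeg g (some z) with
      | none => rw [zNeg_none']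
      | some c =>
        have hc := zNeg_eq_some hgz
        symm
        apply dif_neg
        rintro ⟨-, x, hx⟩
        exact hL ⟨x, by rw [hx]; exact hc⟩

end ZNegPure

end ZNegFunctorial
namespace ZNegFunctorial

open Set Function

universe v

section ZPTop

variable {X Y : Type v}
  [TopologicalSpace X] [T2Space X] [LocallyCompactSpace X]
  [TopologicalSpace Y] [T2Space Y] [LocallyCompactSpace Y]
  {P Pn : PointedExt X} {Q : PointedExt Y} {f : Option X → Option Y}

lemma cont_fs (hf : IsZPEmb P Q f) : Continuous[_, Q.top] (fun x : X => f (some x)) := by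
  letI := P.top
  letI := Q.top
  exact hf.1.comp P.emb.continuous

lemma dom_open (hf : IsZPEmb P Q f) : IsOpen {x : X | (f (some x)).isSome} := by
  letI := Q.top
  have h1 : IsOpen (Set.range (some : Y → Option Y)) := Q.emb.isOpen_range
  have h3 := (cont_fs hf).isOpen_preimage _ h1
  convert h3 using 1
  ext x
  simp only [Set.mem_setOf_eq, Set.mem_preimage, Set.mem_range, Option.isSome_iff_exists]
  exact exists_congr (fun y => eq_comm)

lemma eim_open (hf : IsZPEmb P Q f) {O : Set {x : X // (f (some x)).isSome}}
    (hO : IsOpen O) : IsOpen (zRestrict f '' O) :=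
  hf.2.2.isOpenMap O hO

lemma btOpen_eq (hf : IsZPEmb P Q f) (W : Set Y) :
    {x : X | ∃ h : (f (some x)).isSome, zRestrict f ⟨x, h⟩ ∈ W}
      = Subtype.val '' (zRestrict f ⁻¹' W) := by
  ext x
  constructor
  · rintro ⟨h, hw⟩
    exact ⟨⟨x, h⟩, hw, rfl⟩
  · rintro ⟨p, hp, rfl⟩
    exact ⟨p.2, by simpa using hp⟩

lemma btOpen (hf : IsZPEmb P Q f) {W : Set Y} (hW : IsOpen W) :
    IsOpen {x : X | ∃ h : (f (some x)).isSome, zRestrict f ⟨x, h⟩ ∈ W} := by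
  rw [btOpen_eq hf]
  exact (dom_open hf).isOpenMap_subtype_val _ (hW.preimage hf.2.2.continuous)

lemma dense_push (hf : IsZPEmb P Q f) {T' : Set {x : X // (f (some x)).isSome}}
    {p : {x : X // (f (some x)).isSome}} (hp : ↑p ∈ closure (Subtype.val '' T')) :
    zRestrict f p ∈ closure (zRestrict f '' T') := by
  rw [mem_closure_iff] at hp ⊢
  intro O hO hyO
  have h1 : IsOpen (zRestrict f ⁻¹' O) := hO.preimage hf.2.2.continuous
  obtain ⟨O', hO', hOeq⟩ := isOpen_induced_iff.mp h1
  have hpO' : (↑p : X) ∈ O' := by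
    have hmem : p ∈ zRestrict f ⁻¹' O := hyO
    rw [← hOeq] at hmem
    exact hmem
  obtain ⟨z, hz1, hz2⟩ := hp O' hO' hpO'
  obtain ⟨q, hq, rfl⟩ := hz2
  refine ⟨zRestrict f q, ?_, ⟨q, hq, rfl⟩⟩
  have hq1 : q ∈ Subtype.val ⁻¹' O' := hz1
  rw [hOeq] at hq1
  exact hq1

lemma mem_closure_inter_nbhd {α : Type v} [TopologicalSpace α] {s n : Set α} {a : α}
    (ha : a ∈ closure s) (hn : n ∈ nhds a) : a ∈ closure (s ∩ n) := by
  rw [mem_closure_iff_nhds] at ha ⊢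
  intro t ht
  obtain ⟨z, hz⟩ := ha (t ∩ n) (Filter.inter_mem ht hn)
  exact ⟨z, hz.1.1, hz.2, hz.1.2⟩

lemma ext_sep (E : PointedExt Y) {N : Set Y} (hN : IsCompact N) :
    ∃ V G : Set (Option Y), IsOpen[E.top] V ∧ IsOpen[E.top] G ∧ some '' N ⊆ V ∧
      none ∈ G ∧ Disjoint V G := by
  letI := E.top
  haveI := E.t2
  have hNc : IsCompact (some '' N) := hN.image (ext_cont E)
  obtain ⟨V, G, hV, hG, hNV, hnG, hVG⟩ := hNc.separation_of_notMem (none_notMem_image N)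
  exact ⟨V, G, hV, hG, hNV, hnG, hVG⟩

lemma ext_trace_compact (E : PointedExt Y) {L : Set (Option Y)}
    (hL : @IsCompact _ E.top L) (hnL : none ∉ L) :
    IsCompact (some ⁻¹' L) := by
  letI := E.top
  have him : some '' (some ⁻¹' L) = L := (eq_image_preimage hnL).symm
  rw [E.emb.isEmbedding.isCompact_iff, him]
  exact hL

lemma mq_facts (Q : PointedExt Y) (hf : IsZPEmb P Q f) {M : Set X} (hM : IsCompact M) :
    @IsCompact _ Q.top (f '' (some '' M)) ∧ IsClosed[Q.top] (f '' (some '' M)) := by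
  letI := P.top
  letI := Q.top
  haveI := Q.t2
  have h1 : IsCompact (some '' M) := hM.image (ext_cont P)
  have h2 : IsCompact (f '' (some '' M)) := h1.image hf.1
  exact ⟨h2, h2.isClosed⟩

lemma mq_mem {M : Set X} (hMD : M ⊆ {x : X | (f (some x)).isSome}) {b : Option Y}
    (hb : b ∈ f '' (some '' M)) :
    ∃ p : {x : X // (f (some x)).isSome}, ↑p ∈ M ∧ b = some (zRestrict f p) := by
  obtain ⟨c, ⟨m, hm, rfl⟩, rfl⟩ := hb
  exact ⟨⟨m, hMD hm⟩, hm, f_some_eq (f := f) ⟨m, hMD hm⟩⟩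

/-- THE CORE LEMMA: compactness extraction via a custom pairing partner -/
lemma core_compact (hP : IsNegation P Pn) (hf : IsZPEmb P Q f)
    {U : Set (Option X)} (hU : IsOpen[Pn.top] U) (hnU : none ∈ U)
    {T : Set Y} {A : Set (Option Y)} (hA : IsOpen[Q.top] A) (hnA : none ∈ A)
    {W₂ : Set Y} (hW₂ : IsOpen W₂) (hTW : closure T ⊆ W₂)
    (hdisj : ∀ y ∈ W₂, some y ∉ A) :
    IsCompact (closure (Subtype.val '' {p : {x : X // (f (some x)).isSome} |
        some ↑p ∉ U ∧ zRestrict f p ∈ T})) ∧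
      closure (Subtype.val '' {p : {x : X // (f (some x)).isSome} |
        some ↑p ∉ U ∧ zRestrict f p ∈ T}) ⊆ {x : X | (f (some x)).isSome} := by
  set P₁ : Set {x : X // (f (some x)).isSome} :=
    {p | some ↑p ∉ U ∧ zRestrict f p ∈ T} with hP₁
  set M := closure (Subtype.val '' P₁) with hMdef
  have hMclosed : IsClosed M := isClosed_closure
  have hCclosed : IsClosed {x : X | some x ∉ U} := (ext_trace Pn hU).isClosed_compl
  have hMC : M ⊆ {x : X | some x ∉ U} :=
    closure_minimal (by rintro _ ⟨p, hp, rfl⟩; exact hp.1) hCclosed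
  have hMD : M ⊆ {x : X | (f (some x)).isSome} := by
    intro x hx
    by_contra hxD
    have hfx : f (some x) = none := Option.not_isSome_iff_eq_none.mp hxD
    have hOopen : IsOpen ((fun x : X => f (some x)) ⁻¹' A) := by
      letI := Q.top
      exact (cont_fs hf).isOpen_preimage _ hA
    have hOmem : x ∈ (fun x : X => f (some x)) ⁻¹' A := by
      simp only [Set.mem_preimage]
      rw [hfx]
      exact hnA
    obtain ⟨z, hzO, hzP⟩ := mem_closure_iff.mp hx _ hOopen hOmem
    obtain ⟨q, hq, rfl⟩ := hzP
    have h2 : some (zRestrict f q) ∈ A := by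
      rw [← f_some_eq q]
      exact hzO
    exact hdisj _ (hTW (subset_closure hq.2)) h2
  have hMc2 : ∀ x (hx : x ∈ M), zRestrict f ⟨x, hMD hx⟩ ∈ W₂ := by
    intro x hx
    apply hTW
    have hd := dense_push hf (p := ⟨x, hMD hx⟩) (T' := P₁) hx
    refine closure_mono ?_ hd
    rintro _ ⟨q, hq, rfl⟩
    exact hq.2
  have hpairs : Pairs P (ClosedPartner M hMclosed) := by
    refine pairs_closedPartner P hMclosed (A := f ⁻¹' A) ?_ ?_
      (Bt := {x : X | ∃ h : (f (some x)).isSome, zRestrict f ⟨x, h⟩ ∈ W₂}) (btOpen hf hW₂)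
      ?_ ?_
    · letI := P.top
      letI := Q.top
      exact hf.1.isOpen_preimage _ hA
    · show f none ∈ A
      rw [hf.2.1]
      exact hnA
    · intro x hx
      exact ⟨hMD hx, hMc2 x hx⟩
    · rintro x ⟨h, hw⟩ hmem
      have hfeq : f (some x) = some (zRestrict f ⟨x, h⟩) := f_some_eq ⟨x, h⟩
      refine hdisj _ hw ?_
      rw [← hfeq]
      exact hmem
  have hUcp : IsOpen[(ClosedPartner M hMclosed).top] U :=
    (isOpen_implies_isOpen_iff.mpr (hP.2 _ hpairs)) U hU
  obtain ⟨K, hK, hMK⟩ := (cp_isOpen_iff.mp hUcp).2 hnU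
  have hMsubK : M ⊆ K := by
    intro x hx
    by_contra hxK
    exact (hMC hx) (hMK ⟨hx, hxK⟩)
  exact ⟨hK.of_isClosed_subset hMclosed hMsubK, hMD⟩

end ZPTop

end ZNegFunctorial
namespace ZNegFunctorial

open Set Function

universe v

section ZPTop2

variable {X Y : Type v}
  [TopologicalSpace X] [T2Space X] [LocallyCompactSpace X]
  [TopologicalSpace Y] [T2Space Y] [LocallyCompactSpace Y]
  {P Pn : PointedExt X} {Q Qn : PointedExt Y} {f : Option X → Option Y}

/-- GOAL A: the image of the complement is closed in `Y` -/
lemma F_closed (hP : IsNegation P Pn) (hf : IsZPEmb P Q f)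
    {U : Set (Option X)} (hU : IsOpen[Pn.top] U) (hnU : none ∈ U) :
    IsClosed (zRestrict f '' {p : {x : X // (f (some x)).isSome} | some ↑p ∉ U}) := by
  apply isClosed_of_closure_subset
  intro y₀ hy₀
  by_cases hS : ∃ p : {x : X // (f (some x)).isSome}, zRestrict f p = y₀
  · obtain ⟨p₀, rfl⟩ := hS
    refine ⟨p₀, ?_, rfl⟩
    by_contra hCp
    have hCp' : some ↑p₀ ∈ U := not_not.mp hCp
    have hOopen : IsOpen (zRestrict f '' (Subtype.val ⁻¹' (some ⁻¹' U))) :=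
      eim_open hf ((ext_trace Pn hU).preimage continuous_subtype_val)
    have hmem : zRestrict f p₀ ∈ zRestrict f '' (Subtype.val ⁻¹' (some ⁻¹' U)) :=
      ⟨p₀, hCp', rfl⟩
    obtain ⟨z, hzO, hzF⟩ := mem_closure_iff.mp hy₀ _ hOopen hmem
    obtain ⟨q, hq, rfl⟩ := hzF
    obtain ⟨q', hq', heq⟩ := hzO
    cases hf.2.2.injective heq
    exact hq hq'
  · exfalso
    obtain ⟨N, hNc, hNn⟩ := exists_compact_mem_nhds y₀
    obtain ⟨N₁, hN₁c, hyN₁, hN₁N⟩ :=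
      exists_compact_subset isOpen_interior (mem_interior_iff_mem_nhds.mpr hNn)
    obtain ⟨V, G, hV, hG, hNV, hnG, hVG⟩ := ext_sep Q hNc
    set F := zRestrict f '' {p : {x : X // (f (some x)).isSome} | some ↑p ∉ U} with hF
    set T := F ∩ interior N₁ with hT
    have hTW : closure T ⊆ interior N := by
      calc closure T ⊆ closure (interior N₁) := closure_mono Set.inter_subset_right
        _ ⊆ closure N₁ := closure_mono interior_subset
        _ = N₁ := hN₁c.isClosed.closure_eq
        _ ⊆ interior N := hN₁N
    have hdisjW : ∀ y ∈ interior N, some y ∉ G := by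
      intro y hy hyG
      exact Set.disjoint_left.mp hVG (hNV ⟨y, interior_subset hy, rfl⟩) hyG
    obtain ⟨hMcpt, hMD⟩ := core_compact hP hf hU hnU hG hnG isOpen_interior hTW hdisjW
    set M := closure (Subtype.val '' {p : {x : X // (f (some x)).isSome} |
        some ↑p ∉ U ∧ zRestrict f p ∈ T}) with hM
    obtain ⟨hMqc, hMqcl⟩ := mq_facts Q hf hMcpt
    have hsub : some '' T ⊆ f '' (some '' M) := by
      rintro _ ⟨y, hyT, rfl⟩
      obtain ⟨p, hpU, rfl⟩ := hyT.1
      exact ⟨some ↑p, ⟨↑p, subset_closure ⟨p, ⟨hpU, hyT⟩, rfl⟩, rfl⟩, (f_some_eq p)⟩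
    have hy₀T : y₀ ∈ closure T :=
      mem_closure_inter_nbhd hy₀ (isOpen_interior.mem_nhds hyN₁)
    have h1 : some y₀ ∈ f '' (some '' M) := by
      letI := Q.top
      have h2 : some y₀ ∈ closure (some '' T) :=
        (image_closure_subset_closure_image (ext_cont Q)) ⟨y₀, hy₀T, rfl⟩
      exact closure_minimal hsub hMqcl h2
    obtain ⟨p, hpM, hpeq⟩ := mq_mem hMD h1
    exact hS ⟨p, (Option.some_injective Y hpeq).symm⟩

/-- GOAL B: the lifted image is closed in the negation -/
lemma sF_closed (hP : IsNegation P Pn) (hQ : IsNegation Q Qn) (hf : IsZPEmb P Q f)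
    {U : Set (Option X)} (hU : IsOpen[Pn.top] U) (hnU : none ∈ U) :
    IsClosed[Qn.top]
      (some '' (zRestrict f '' {p : {x : X // (f (some x)).isSome} | some ↑p ∉ U})) := by
  set F := zRestrict f '' {p : {x : X // (f (some x)).isSome} | some ↑p ∉ U} with hF
  have hFcl : IsClosed F := F_closed hP hf hU hnU
  obtain ⟨A₀, B₀, hA₀, hB₀, hnA₀, hnB₀, hAB⟩ := pairs_basic hQ.1
  letI := Qn.top
  haveI t2i := Qn.t2
  haveI cgi := Qn.cg
  have hIns : IsClosed (insert none (some '' F) : Set (Option Y)) := by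
    rw [← isOpen_compl_iff, compl_insert_none_image]
    exact ext_openMap Qn _ hFcl.isOpen_compl
  apply CompactlyGeneratedSpace.isClosed
  intro L hL
  have hLclosed : IsClosed L := hL.isClosed
  suffices hnone : none ∉ closure (some '' F ∩ L) by
    apply isClosed_of_closure_subset
    intro b hb
    have hb1 : b ∈ insert none (some '' F) ∩ L :=
      closure_minimal (Set.inter_subset_inter_left _ (Set.subset_insert _ _))
        (hIns.inter hLclosed) hb
    rcases hb1.1 with rfl | hbF
    · exact absurd hb hnone
    · exact ⟨hbF, hb1.2⟩
  intro hcl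
  -- split off the compact part outside B₀
  have hLBc : IsCompact (L ∩ B₀ᶜ) := hL.inter_right hB₀.isClosed_compl
  have hnLB : none ∉ L ∩ B₀ᶜ := fun h => h.2 hnB₀
  have hK₀c : IsCompact (some ⁻¹' (L ∩ B₀ᶜ) : Set Y) := ext_trace_compact Qn hLBc hnLB
  set K₀ : Set Y := some ⁻¹' (L ∩ B₀ᶜ) with hK₀
  set E₁ : Set Y := {y : Y | y ∈ F ∧ some y ∈ B₀ ∧ some y ∈ L} with hE₁
  have hsplit : some '' F ∩ L ⊆ some '' E₁ ∪ some '' (F ∩ K₀) := by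
    rintro b ⟨⟨y, hyF, rfl⟩, hbL⟩
    by_cases hyB : some y ∈ B₀
    · exact Or.inl ⟨y, ⟨hyF, hyB, hbL⟩, rfl⟩
    · exact Or.inr ⟨y, ⟨hyF, ⟨hbL, hyB⟩⟩, rfl⟩
  have hcl₁ : none ∈ closure (some '' E₁) := by
    have h1 : none ∈ closure (some '' E₁ ∪ some '' (F ∩ K₀)) :=
      closure_mono hsplit hcl
    rw [closure_union] at h1
    rcases h1 with h1 | h1
    · exact h1
    · exfalso
      have hK₀Qc : IsCompact (some '' K₀ : Set (Option Y)) := hK₀c.image (ext_cont Qn)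
      obtain ⟨V₀, G₀, hV₀, hG₀, hKV₀, hnG₀, hVG₀⟩ :=
        hK₀Qc.separation_of_notMem (none_notMem_image K₀)
      obtain ⟨z, hzG, hzM⟩ := mem_closure_iff.mp h1 _ hG₀ hnG₀
      obtain ⟨y, hy, rfl⟩ := hzM
      exact Set.disjoint_left.mp hVG₀ (hKV₀ ⟨y, hy.2, rfl⟩) hzG
  -- now the core machinery
  obtain ⟨N_K, hN_Kc, hKN⟩ := exists_compact_superset hK₀c
  obtain ⟨V, G, hV, hG, hNV, hnG, hVG⟩ := ext_sep Q hN_Kc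
  set W₂ : Set Y := (some ⁻¹' B₀) ∪ interior N_K with hW₂def
  have hW₂open : IsOpen W₂ := (ext_trace Qn hB₀).union isOpen_interior
  have hE₁L : some '' E₁ ⊆ L := by
    rintro _ ⟨y, hy, rfl⟩
    exact hy.2.2
  have hTW : closure E₁ ⊆ W₂ := by
    intro y' hy'
    have h1 : some y' ∈ L := by
      have h2 : some y' ∈ closure (some '' E₁) :=
        (image_closure_subset_closure_image (ext_cont Qn)) ⟨y', hy', rfl⟩
      exact closure_minimal hE₁L hLclosed h2
    by_cases hyB : some y' ∈ B₀
    · exact Or.inl hyB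
    · exact Or.inr (hKN ⟨h1, hyB⟩)
  have hdisjW : ∀ y ∈ W₂, some y ∉ A₀ ∩ G := by
    rintro y (hyB | hyN) hyA
    · have : some y ∈ A₀ ∩ B₀ := ⟨hyA.1, hyB⟩
      rw [hAB] at this
      exact Option.some_ne_none y this
    · exact Set.disjoint_left.mp hVG (hNV ⟨y, interior_subset hyN, rfl⟩) hyA.2
  have hnAG : none ∈ A₀ ∩ G := ⟨hnA₀, hnG⟩
  have hAGopen : IsOpen[Q.top] (A₀ ∩ G) := by
    letI := Q.top
    exact hA₀.inter hG
  obtain ⟨hMcpt, hMD⟩ := core_compact hP hf hU hnU hAGopen hnAG hW₂open hTW hdisjW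
  set M := closure (Subtype.val '' {p : {x : X // (f (some x)).isSome} |
      some ↑p ∉ U ∧ zRestrict f p ∈ E₁}) with hM
  obtain ⟨hMqc, hMqcl⟩ := mq_facts Q hf hMcpt
  -- the compact trace K*
  have hMqA : @IsCompact _ Q.top (f '' (some '' M) ∩ A₀ᶜ) := by
    letI := Q.top
    exact hMqc.inter_right hA₀.isClosed_compl
  have hnMqA : none ∉ f '' (some '' M) ∩ A₀ᶜ := fun h => h.2 hnA₀
  have hKs : IsCompact (some ⁻¹' (f '' (some '' M) ∩ A₀ᶜ) : Set Y) :=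
    ext_trace_compact Q hMqA hnMqA
  set Ks : Set Y := some ⁻¹' (f '' (some '' M) ∩ A₀ᶜ) with hKsdef
  have hE₁Ks : E₁ ⊆ Ks := by
    rintro y ⟨hyF, hyB, hyL⟩
    obtain ⟨p, hpU, rfl⟩ := hyF
    constructor
    · exact ⟨some ↑p, ⟨↑p, subset_closure ⟨p, ⟨hpU, ⟨p, hpU, rfl⟩, hyB, hyL⟩, rfl⟩, rfl⟩,
        f_some_eq p⟩
    · intro hyA
      have : some (zRestrict f p) ∈ A₀ ∩ B₀ := ⟨hyA, hyB⟩
      rw [hAB] at this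
      exact Option.some_ne_none _ this
  have hKsQnc : IsCompact (some '' Ks : Set (Option Y)) := hKs.image (ext_cont Qn)
  obtain ⟨Vs, Gs, hVs, hGs, hKVs, hnGs, hVGs⟩ :=
    hKsQnc.separation_of_notMem (none_notMem_image Ks)
  obtain ⟨z, hzG, hzE⟩ := mem_closure_iff.mp hcl₁ _ hGs hnGs
  obtain ⟨y, hy, rfl⟩ := hzE
  exact Set.disjoint_left.mp hVGs (hKVs ⟨y, hE₁Ks hy, rfl⟩) hzG

end ZPTop2

end ZNegFunctorial
namespace ZNegFunctorial

open Set Function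

universe v

section ZPTop3

variable {X Y : Type v}
  [TopologicalSpace X] [T2Space X] [LocallyCompactSpace X]
  [TopologicalSpace Y] [T2Space Y] [LocallyCompactSpace Y]
  {P Pn : PointedExt X} {Q Qn : PointedExt Y} {f : Option X → Option Y}

/-- continuity of the negation of a zero-pointed embedding -/
lemma zNeg_continuous (hP : IsNegation P Pn) (hQ : IsNegation Q Qn) (hf : IsZPEmb P Q f) :
    Continuous[Qn.top, Pn.top] (zNeg f) := by
  letI := Qn.top
  rw [continuous_def]
  intro U hU
  by_cases hnU : none ∈ U
  · have hpre : zNeg f ⁻¹' U =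
        (some '' (zRestrict f '' {p : {x : X // (f (some x)).isSome} | some ↑p ∉ U}))ᶜ := by
      ext b
      cases b with
      | none =>
        simp only [Set.mem_preimage, zNeg_none', Set.mem_compl_iff]
        exact iff_of_true hnU (none_notMem_image _)
      | some y =>
        simp only [Set.mem_preimage, Set.mem_compl_iff]
        constructor
        · intro hb hmem
          obtain ⟨z, ⟨p, hp, rfl⟩, heq⟩ := hmem
          cases Option.some_injective Y heq
          rw [zNeg_some_unique hf.2.2.injective (f_some_eq p)] at hb
          exact hp hb
        · intro hb
          by_cases hS : ∃ p : {x : X // (f (some x)).isSome}, zRestrict f p = y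
          · obtain ⟨p, rfl⟩ := hS
            rw [zNeg_some_unique hf.2.2.injective (f_some_eq p)]
            by_contra hpu
            exact hb ⟨zRestrict f p, ⟨p, hpu, rfl⟩, rfl⟩
          · rw [zNeg_some_not (fun p h => hS ⟨p, h⟩)]
            exact hnU
    rw [hpre, isOpen_compl_iff]
    exact sF_closed hP hQ hf hU hnU
  · have hpre : zNeg f ⁻¹' U =
        some '' (zRestrict f '' (Subtype.val ⁻¹' (some ⁻¹' U))) := by
      ext b
      cases b with
      | none =>
        simp only [Set.mem_preimage, zNeg_none']
        exact iff_of_false hnU (fun h => none_notMem_image _ h)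
      | some y =>
        simp only [Set.mem_preimage]
        constructor
        · intro hb
          by_cases hS : ∃ p : {x : X // (f (some x)).isSome}, zRestrict f p = y
          · obtain ⟨p, rfl⟩ := hS
            rw [zNeg_some_unique hf.2.2.injective (f_some_eq p)] at hb
            exact ⟨zRestrict f p, ⟨p, hb, rfl⟩, rfl⟩
          · rw [zNeg_some_not (fun p h => hS ⟨p, h⟩)] at hb
            exact absurd hb hnU
        · rintro ⟨z, ⟨p, hp, rfl⟩, heq⟩
          cases Option.some_injective Y heq
          rw [zNeg_some_unique hf.2.2.injective (f_some_eq p)]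
          exact hp
    rw [hpre]
    exact ext_openMap Qn _ (eim_open hf ((ext_trace Pn hU).preimage continuous_subtype_val))

/-- the restriction of the negation is an open embedding -/
lemma zNeg_restrict_emb (hf : IsZPEmb P Q f) : IsOpenEmbedding (zRestrict (zNeg f)) := by
  have hDs : ∀ q : {y : Y // (zNeg f (some y)).isSome},
      (f (some (zRestrict (zNeg f) q))).isSome := fun q => by
    rw [zNeg_restrict_key q]; rfl
  have hE : ∀ q : {y : Y // (zNeg f (some y)).isSome},
      zRestrict f ⟨zRestrict (zNeg f) q, hDs q⟩ = ↑q := fun q => by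
    have h1 := f_some_eq (f := f) ⟨zRestrict (zNeg f) q, hDs q⟩
    rw [zNeg_restrict_key q] at h1
    exact (Option.some_injective Y h1).symm
  apply IsOpenEmbedding.of_continuous_injective_isOpenMap
  · rw [continuous_def]
    intro O hO
    have hpre : zRestrict (zNeg f) ⁻¹' O =
        Subtype.val ⁻¹' (zRestrict f '' (Subtype.val ⁻¹' O)) := by
      ext q
      simp only [Set.mem_preimage]
      constructor
      · intro h
        exact ⟨⟨zRestrict (zNeg f) q, hDs q⟩, h, hE q⟩
      · rintro ⟨p, hp, heq⟩
        have h2 : zRestrict f ⟨zRestrict (zNeg f) q, hDs q⟩ = zRestrict f p := by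
          rw [hE q, heq]
        have h3 : zRestrict (zNeg f) q = ↑p :=
          congrArg Subtype.val (hf.2.2.injective h2)
        rw [h3]
        exact hp
    rw [hpre]
    exact (eim_open hf (hO.preimage continuous_subtype_val)).preimage continuous_subtype_val
  · exact zNeg_restrict_inj
  · intro s hs
    obtain ⟨O', hO', hOeq⟩ := isOpen_induced_iff.mp hs
    have him : zRestrict (zNeg f) '' (Subtype.val ⁻¹' O') =
        Subtype.val '' (zRestrict f ⁻¹' O') := by
      ext x
      constructor
      · rintro ⟨q, hq, rfl⟩
        refine ⟨⟨zRestrict (zNeg f) q, hDs q⟩, ?_, rfl⟩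
        show zRestrict f _ ∈ O'
        rw [hE q]
        exact hq
      · rintro ⟨p, hp, rfl⟩
        have hq2 : (zNeg f (some (zRestrict f p))).isSome := by
          rw [zNeg_some_unique hf.2.2.injective (f_some_eq p)]; rfl
        refine ⟨⟨zRestrict f p, hq2⟩, hp, ?_⟩
        have h4 : some (zRestrict (zNeg f) ⟨zRestrict f p, hq2⟩) =
            zNeg f (some (zRestrict f p)) := Option.some_get hq2
        rw [zNeg_some_unique hf.2.2.injective (f_some_eq p)] at h4
        exact Option.some_injective X h4
    rw [← hOeq, him]
    exact (dom_open hf).isOpenMap_subtype_val _ (hO'.preimage hf.2.2.continuous)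

end ZPTop3

end ZNegFunctorial
/-- Negation of zero-pointed embeddings between well-pointed extensions.
Every zero-pointed embedding `f : X_∗ → Y_∗` induces a zero-pointed embedding
`f^¬ : Y_∗^¬ → X_∗^¬`; moreover `(g ∘ f)^¬ = f^¬ ∘ g^¬`, `(id)^¬ = id`, and `f^¬¬ = f`
(under the identifications `X_∗ ≅ X_∗^¬¬` and `Y_∗ ≅ Y_∗^¬¬`, which are the identity on
underlying sets). -/
theorem zNeg_functorial {X Y Z : Type u}
    [TopologicalSpace X] [LocallyCompactSpace X] [T2Space X]
    [TopologicalSpace Y] [LocallyCompactSpace Y] [T2Space Y]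
    [TopologicalSpace Z] [LocallyCompactSpace Z] [T2Space Z]
    (P Pn : PointedExt X) (Q Qn : PointedExt Y) (R Rn : PointedExt Z)
    (hPw : WellPointed P) (hQw : WellPointed Q) (hRw : WellPointed R)
    (hP : IsNegation P Pn) (hQ : IsNegation Q Qn) (hR : IsNegation R Rn)
    (f : Option X → Option Y) (g : Option Y → Option Z)
    (hf : IsZPEmb P Q f) (hg : IsZPEmb Q R g) :
    IsZPEmb Qn Pn (zNeg f) ∧
    zNeg (g ∘ f) = zNeg f ∘ zNeg g ∧
    zNeg (id : Option X → Option X) = id ∧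
    zNeg (zNeg f) = f := by
  refine ⟨⟨ZNegFunctorial.zNeg_continuous hP hQ hf, ZNegFunctorial.zNeg_none' f,
    ZNegFunctorial.zNeg_restrict_emb hf⟩, ?_, ?_, ?_⟩
  · exact ZNegFunctorial.zNeg_comp hf.2.2.injective hg.2.2.injective hf.2.1 hg.2.1
  · exact ZNegFunctorial.zNeg_id
  · exact ZNegFunctorial.zNeg_zNeg hf.2.2.injective hf.2.1
end

section
/- For pointed extensions X_∗ of X and Y_∗ of Y (locally compact Hausdorff), the wedge sum X_∗ ∨ Y_∗ is a pointed extension of the disjoint union X ⊔ Y, its negation satisfies (X_∗ ∨ Y_∗)^¬ = X_∗^¬ ∨ Y_∗^¬, and if X_∗ and Y_∗ are well-pointed then so is X_∗ ∨ Y_∗. -/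
open Topology TopologicalSpace

/-- The wedge sum `X_∗ ∨ Y_∗`, as a topology on `Option (X ⊕ Y)`: the quotient of the
disjoint union `X_∗ ⊔ Y_∗` identifying the two basepoints.  A set is open iff its preimage
under each of the two canonical maps `X_∗ → X_∗ ∨ Y_∗` and `Y_∗ → X_∗ ∨ Y_∗` is open. -/
def wedgeTop {X Y : Type u} [TopologicalSpace X] [TopologicalSpace Y]
    (P : PointedExt X) (Q : PointedExt Y) : TopologicalSpace (Option (X ⊕ Y)) :=
  TopologicalSpace.coinduced (Option.map Sum.inl) P.top ⊔
    TopologicalSpace.coinduced (Option.map Sum.inr) Q.top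

set_option linter.unusedSectionVars false

universe u

namespace WedgeAux

variable {X Y : Type u}

abbrev j1 : Option X → Option (X ⊕ Y) := Option.map Sum.inl
abbrev j2 : Option Y → Option (X ⊕ Y) := Option.map Sum.inr

/-- retraction -/

def r1 : Option (X ⊕ Y) → Option X := fun z => z.bind (Sum.elim some fun _ => none)
def r2 : Option (X ⊕ Y) → Option Y := fun z => z.bind (Sum.elim (fun _ => none) some)

def C1 : Set (Option (X ⊕ Y)) := Set.range fun x : X => some (Sum.inl x)
def C2 : Set (Option (X ⊕ Y)) := Set.range fun y : Y => some (Sum.inr y)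

def phi1 (V : Set (Option X)) : Set (Option (X ⊕ Y)) := r1 ⁻¹' V ∪ C2
def phi2 (V : Set (Option Y)) : Set (Option (X ⊕ Y)) := r2 ⁻¹' V ∪ C1

lemma j1_inj : Function.Injective (j1 : Option X → Option (X ⊕ Y)) :=
  Option.map_injective Sum.inl_injective

lemma j2_inj : Function.Injective (j2 : Option Y → Option (X ⊕ Y)) :=
  Option.map_injective Sum.inr_injective

lemma r1_j1 : (r1 ∘ (j1 : Option X → Option (X ⊕ Y))) = id := by
  funext a; cases a <;> rfl

lemma r1_j2 : (r1 ∘ (j2 : Option Y → Option (X ⊕ Y))) = fun _ => none := by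
  funext a; cases a <;> rfl

lemma r2_j2 : (r2 ∘ (j2 : Option Y → Option (X ⊕ Y))) = id := by
  funext a; cases a <;> rfl

lemma r2_j1 : (r2 ∘ (j1 : Option X → Option (X ⊕ Y))) = fun _ => none := by
  funext a; cases a <;> rfl

lemma j1_preimage_phi1 (V : Set (Option X)) : j1 ⁻¹' (phi1 (Y := Y) V) = V := by
  ext a
  cases a <;> simp [phi1, r1, C2]

lemma j2_preimage_phi2 (V : Set (Option Y)) : j2 ⁻¹' (phi2 (X := X) V) = V := by
  ext a
  cases a <;> simp [phi2, r2, C1]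

lemma j2_preimage_phi1_of_mem {V : Set (Option X)} (h : none ∈ V) :
    j2 ⁻¹' (phi1 (Y := Y) V) = Set.univ := by
  ext a
  cases a <;> simp [phi1, r1, C2, h]

lemma j2_preimage_phi1_of_not_mem {V : Set (Option X)} (h : none ∉ V) :
    j2 ⁻¹' (phi1 (Y := Y) V) = Set.range (some : Y → Option Y) := by
  ext a
  cases a <;> simp [phi1, r1, C2, h]

lemma j1_preimage_phi2_of_mem {V : Set (Option Y)} (h : none ∈ V) :
    j1 ⁻¹' (phi2 (X := X) V) = Set.univ := by
  ext a
  cases a <;> simp [phi2, r2, C1, h]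

lemma j1_preimage_phi2_of_not_mem {V : Set (Option Y)} (h : none ∉ V) :
    j1 ⁻¹' (phi2 (X := X) V) = Set.range (some : X → Option X) := by
  ext a
  cases a <;> simp [phi2, r2, C1, h]

lemma phi1_inter (V V' : Set (Option X)) :
    phi1 (Y := Y) (V ∩ V') = phi1 V ∩ phi1 V' := by
  simp only [phi1, Set.preimage_inter]
  rw [Set.inter_union_distrib_right]

lemma phi2_inter (V V' : Set (Option Y)) :
    phi2 (X := X) (V ∩ V') = phi2 V ∩ phi2 V' := by
  simp only [phi2, Set.preimage_inter]
  rw [Set.inter_union_distrib_right]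

lemma phi1_empty : phi1 (X := X) (Y := Y) ∅ = C2 := by
  simp [phi1]

lemma phi2_empty : phi2 (X := X) (Y := Y) ∅ = C1 := by
  simp [phi2]

lemma phi1_sUnion (S : Set (Set (Option X))) :
    phi1 (Y := Y) (⋃₀ S) = (⋃ s ∈ S, phi1 s) ∪ C2 := by
  ext z
  simp only [phi1, Set.mem_union, Set.mem_preimage, Set.mem_sUnion, Set.mem_iUnion,
    exists_prop]
  constructor
  · rintro (⟨s, hs, hz⟩ | hz)
    · exact Or.inl ⟨s, hs, Or.inl hz⟩
    · exact Or.inr hz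
  · rintro (⟨s, hs, hz | hz⟩ | hz)
    · exact Or.inl ⟨s, hs, hz⟩
    · exact Or.inr hz
    · exact Or.inr hz

lemma phi2_sUnion (S : Set (Set (Option Y))) :
    phi2 (X := X) (⋃₀ S) = (⋃ s ∈ S, phi2 s) ∪ C1 := by
  ext z
  simp only [phi2, Set.mem_union, Set.mem_preimage, Set.mem_sUnion, Set.mem_iUnion,
    exists_prop]
  constructor
  · rintro (⟨s, hs, hz⟩ | hz)
    · exact Or.inl ⟨s, hs, Or.inl hz⟩
    · exact Or.inr hz
  · rintro (⟨s, hs, hz | hz⟩ | hz)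
    · exact Or.inl ⟨s, hs, hz⟩
    · exact Or.inr hz
    · exact Or.inr hz

lemma eq_phi_inter_phi (U : Set (Option (X ⊕ Y))) :
    U = phi1 (j1 ⁻¹' U) ∩ phi2 (j2 ⁻¹' U) := by
  ext z
  rcases z with _ | (x | y) <;>
    simp [phi1, phi2, r1, r2, C1, C2]



lemma j1_preimage_C2 : j1 ⁻¹' (C2 (X := X) (Y := Y)) = ∅ := by
  ext a; cases a <;> simp [C2]

lemma j2_preimage_C2 : j2 ⁻¹' (C2 (X := X) (Y := Y)) = Set.range (some : Y → Option Y) := by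
  ext a; cases a <;> simp [C2]

lemma j2_preimage_C1 : j2 ⁻¹' (C1 (X := X) (Y := Y)) = ∅ := by
  ext a; cases a <;> simp [C1]

lemma j1_preimage_C1 : j1 ⁻¹' (C1 (X := X) (Y := Y)) = Set.range (some : X → Option X) := by
  ext a; cases a <;> simp [C1]

lemma C1_eq : C1 (X := X) (Y := Y) = (some : X ⊕ Y → Option (X ⊕ Y)) '' Set.range Sum.inl := by
  ext z; simp [C1]

lemma C2_eq : C2 (X := X) (Y := Y) = (some : X ⊕ Y → Option (X ⊕ Y)) '' Set.range Sum.inr := by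
  ext z; simp [C2]

lemma compl_range_j1 : (Set.range (j1 : Option X → Option (X ⊕ Y)))ᶜ = C2 := by
  ext z; rcases z with _ | (x | y) <;> simp [C2, j1]

lemma j1_preimage_some_image (S : Set (X ⊕ Y)) :
    j1 ⁻¹' ((some : X ⊕ Y → Option (X ⊕ Y)) '' S) = (some : X → Option X) '' (Sum.inl ⁻¹' S) := by
  ext a; cases a <;> simp

lemma j2_preimage_some_image (S : Set (X ⊕ Y)) :
    j2 ⁻¹' ((some : X ⊕ Y → Option (X ⊕ Y)) '' S) = (some : Y → Option Y) '' (Sum.inr ⁻¹' S) := by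
  ext a; cases a <;> simp

section Top

variable [TopologicalSpace X] [TopologicalSpace Y]

-- a generic helper
lemma continuous_inf_map {α β : Type*} {t₁ t₂ : TopologicalSpace α}
    {s₁ s₂ : TopologicalSpace β} {f : α → β}
    (h₁ : Continuous[t₁, s₁] f) (h₂ : Continuous[t₂, s₂] f) :
    Continuous[t₁ ⊓ t₂, s₁ ⊓ s₂] f := by
  rw [continuous_iff_coinduced_le] at h₁ h₂ ⊢
  exact le_inf ((coinduced_mono inf_le_left).trans h₁)
    ((coinduced_mono inf_le_right).trans h₂)

lemma isOpen_of_generateOpen_map {α β : Type*} {G : Set (Set α)} (u : TopologicalSpace β)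
    (φ : Set α → Set β) (c : Set β)
    (hb : ∀ s ∈ G, IsOpen[u] (φ s)) (hu : IsOpen[u] (φ Set.univ))
    (he : IsOpen[u] c)
    (hi : ∀ s t, φ (s ∩ t) = φ s ∩ φ t)
    (hU : ∀ S, φ (⋃₀ S) = (⋃ s ∈ S, φ s) ∪ c)
    {s : Set α} (hs : TopologicalSpace.GenerateOpen G s) : IsOpen[u] (φ s) := by
  letI := u
  induction hs with
  | basic s hs => exact hb s hs
  | univ => exact hu
  | inter s t _ _ ihs iht => rw [hi]; exact ihs.inter iht
  | sUnion S _ ih => rw [hU]; exact (isOpen_biUnion ih).union he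

lemma plus_le (P : PointedExt X) : plusTop X ≤ P.top := by
  letI := P.top
  exact continuous_iff_coinduced_le.mp P.emb.continuous

lemma isOpen_plus_iff {U : Set (Option X)} :
    IsOpen[plusTop X] U ↔ IsOpen (some ⁻¹' U) := by
  rw [plusTop]; exact isOpen_coinduced

lemma wedge_isOpen_iff (P : PointedExt X) (Q : PointedExt Y) {U : Set (Option (X ⊕ Y))} :
    IsOpen[wedgeTop P Q] U ↔ IsOpen[P.top] (j1 ⁻¹' U) ∧ IsOpen[Q.top] (j2 ⁻¹' U) := by
  rw [wedgeTop]
  exact and_congr isOpen_coinduced isOpen_coinduced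

lemma continuous_j1 (P : PointedExt X) (Q : PointedExt Y) :
    Continuous[P.top, wedgeTop P Q] j1 :=
  continuous_iff_coinduced_le.mpr (le_sup_left (a := TopologicalSpace.coinduced j1 P.top))

lemma continuous_j2 (P : PointedExt X) (Q : PointedExt Y) :
    Continuous[Q.top, wedgeTop P Q] j2 :=
  continuous_iff_coinduced_le.mpr (le_sup_right (b := TopologicalSpace.coinduced j2 Q.top))

lemma continuous_some_wedge (P : PointedExt X) (Q : PointedExt Y) :
    Continuous[_, wedgeTop P Q] (some : X ⊕ Y → Option (X ⊕ Y)) := by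
  letI := P.top; letI := Q.top; letI := wedgeTop P Q
  rw [continuous_sum_dom]
  exact ⟨(continuous_j1 P Q).comp P.emb.continuous, (continuous_j2 P Q).comp Q.emb.continuous⟩

lemma plus_le_wedge (P : PointedExt X) (Q : PointedExt Y) :
    plusTop (X ⊕ Y) ≤ wedgeTop P Q :=
  continuous_iff_coinduced_le.mp (continuous_some_wedge P Q)


lemma continuous_r1 (P : PointedExt X) (Q : PointedExt Y) :
    Continuous[wedgeTop P Q, P.top] r1 := by
  have hconst : Continuous[Q.top, P.top] (fun _ : Option Y => (none : Option X)) := by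
    letI := Q.top; letI := P.top; exact continuous_const
  rw [continuous_iff_coinduced_le, wedgeTop, coinduced_sup,
    @coinduced_compose _ _ _ P.top j1 r1, @coinduced_compose _ _ _ Q.top j2 r1,
    r1_j1, r1_j2, @coinduced_id _ P.top]
  exact sup_le le_rfl (continuous_iff_coinduced_le.mp hconst)

lemma continuous_r2 (P : PointedExt X) (Q : PointedExt Y) :
    Continuous[wedgeTop P Q, Q.top] r2 := by
  have hconst : Continuous[P.top, Q.top] (fun _ : Option X => (none : Option Y)) := by
    letI := P.top; letI := Q.top; exact continuous_const
  rw [continuous_iff_coinduced_le, wedgeTop, coinduced_sup,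
    @coinduced_compose _ _ _ P.top j1 r2, @coinduced_compose _ _ _ Q.top j2 r2,
    r2_j1, r2_j2, @coinduced_id _ Q.top]
  exact sup_le (continuous_iff_coinduced_le.mp hconst) le_rfl

lemma isOpen_C2 (P : PointedExt X) (Q : PointedExt Y) : IsOpen[wedgeTop P Q] C2 := by
  letI := P.top; letI := Q.top
  refine (wedge_isOpen_iff P Q).mpr ⟨?_, ?_⟩
  · rw [j1_preimage_C2]; exact isOpen_empty
  · rw [j2_preimage_C2]; exact Q.emb.isOpen_range

lemma isOpen_C1 (P : PointedExt X) (Q : PointedExt Y) : IsOpen[wedgeTop P Q] C1 := by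
  letI := P.top; letI := Q.top
  refine (wedge_isOpen_iff P Q).mpr ⟨?_, ?_⟩
  · rw [j1_preimage_C1]; exact P.emb.isOpen_range
  · rw [j2_preimage_C1]; exact isOpen_empty

lemma phi1_open (P : PointedExt X) (Q : PointedExt Y) {V : Set (Option X)}
    (hV : IsOpen[P.top] V) : IsOpen[wedgeTop P Q] (phi1 V) := by
  letI := P.top; letI := Q.top
  refine (wedge_isOpen_iff P Q).mpr ⟨?_, ?_⟩
  · rw [j1_preimage_phi1]; exact hV
  · by_cases h : none ∈ V
    · rw [j2_preimage_phi1_of_mem h]; exact isOpen_univ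
    · rw [j2_preimage_phi1_of_not_mem h]; exact Q.emb.isOpen_range

lemma phi2_open (P : PointedExt X) (Q : PointedExt Y) {V : Set (Option Y)}
    (hV : IsOpen[Q.top] V) : IsOpen[wedgeTop P Q] (phi2 V) := by
  letI := P.top; letI := Q.top
  refine (wedge_isOpen_iff P Q).mpr ⟨?_, ?_⟩
  · by_cases h : none ∈ V
    · rw [j1_preimage_phi2_of_mem h]; exact isOpen_univ
    · rw [j1_preimage_phi2_of_not_mem h]; exact P.emb.isOpen_range
  · rw [j2_preimage_phi2]; exact hV

lemma some_image_open (P : PointedExt X) (Q : PointedExt Y) {S : Set (X ⊕ Y)}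
    (hS : IsOpen S) : IsOpen[wedgeTop P Q] ((some : X ⊕ Y → Option (X ⊕ Y)) '' S) := by
  letI := P.top; letI := Q.top
  refine (wedge_isOpen_iff P Q).mpr ⟨?_, ?_⟩
  · rw [j1_preimage_some_image]; exact P.emb.isOpenMap _ (hS.preimage continuous_inl)
  · rw [j2_preimage_some_image]; exact Q.emb.isOpenMap _ (hS.preimage continuous_inr)

/-- The wedge of two pointed extensions, as a pointed extension. -/
def wedgeExt (P : PointedExt X) (Q : PointedExt Y) : PointedExt (X ⊕ Y) where
  top := wedgeTop P Q
  t2 := by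
    letI := P.top; letI := Q.top; haveI := P.t2; haveI := Q.t2
    letI := wedgeTop P Q
    refine T2Space.of_injective_continuous
      (f := fun z : Option (X ⊕ Y) => (r1 z, r2 z)) ?_ ?_
    · intro a b h
      rcases a with _ | (x | y) <;> rcases b with _ | (x' | y') <;>
        simp_all [r1, r2, Prod.ext_iff]
    · exact Continuous.prodMk (continuous_r1 P Q) (continuous_r2 P Q)
  cg := by
    letI := P.top; letI := Q.top; haveI := P.cg; haveI := Q.cg
    letI := wedgeTop P Q
    refine compactlyGeneratedSpace_of_coinduced
      (f := Sum.elim j1 j2) ?_ ?_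
    · exact Continuous.sumElim (continuous_j1 P Q) (continuous_j2 P Q)
    · show wedgeTop P Q = TopologicalSpace.coinduced _ instTopologicalSpaceSum
      rw [instTopologicalSpaceSum, coinduced_sup, coinduced_compose, coinduced_compose]
      rfl
  emb := by
    letI := P.top; letI := Q.top
    letI := wedgeTop P Q
    refine IsOpenEmbedding.of_continuous_injective_isOpenMap
      (continuous_some_wedge P Q) (Option.some_injective _) ?_
    intro S hS
    exact some_image_open P Q hS

@[simp] lemma wedgeExt_top (P : PointedExt X) (Q : PointedExt Y) :
    (wedgeExt P Q).top = wedgeTop P Q := rfl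

lemma some_preimage_phi1_inl (V : Set (Option X)) :
    Sum.inl ⁻¹' ((some : X ⊕ Y → Option (X ⊕ Y)) ⁻¹' phi1 V) = (some : X → Option X) ⁻¹' V := by
  ext x; simp [phi1, r1, C2]

lemma some_preimage_phi1_inr (V : Set (Option X)) :
    Sum.inr ⁻¹' ((some : X ⊕ Y → Option (X ⊕ Y)) ⁻¹' phi1 V) = (Set.univ : Set Y) := by
  ext y; simp [phi1, r1, C2]

lemma some_preimage_phi2_inr (V : Set (Option Y)) :
    Sum.inr ⁻¹' ((some : X ⊕ Y → Option (X ⊕ Y)) ⁻¹' phi2 V) = (some : Y → Option Y) ⁻¹' V := by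
  ext y; simp [phi2, r2, C1]

lemma some_preimage_phi2_inl (V : Set (Option Y)) :
    Sum.inl ⁻¹' ((some : X ⊕ Y → Option (X ⊕ Y)) ⁻¹' phi2 V) = (Set.univ : Set X) := by
  ext x; simp [phi2, r2, C1]

lemma U_eq_of_preimages {U O₁ O₂ : Set (Option (X ⊕ Y))}
    (h1 : j1 ⁻¹' O₁ = j1 ⁻¹' U) (h2 : j2 ⁻¹' O₂ = j2 ⁻¹' U) :
    U = (O₁ ∩ C1) ∪ ((O₂ ∩ C2) ∪ (O₁ ∩ O₂)) := by
  have e1 := Set.ext_iff.mp h1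
  have e2 := Set.ext_iff.mp h2
  ext z
  rcases z with _ | (x | y)
  · have a := e1 (none : Option X); have b := e2 (none : Option Y)
    simp only [Set.mem_preimage] at a b
    simp only [Set.mem_union, Set.mem_inter_iff, C1, C2, Set.mem_range]
    simp only [show (j1 (none : Option X) : Option (X ⊕ Y)) = none from rfl] at a
    simp only [show (j2 (none : Option Y) : Option (X ⊕ Y)) = none from rfl] at b
    simp only [show ∀ x : X, ¬ (some (Sum.inl x) = (none : Option (X ⊕ Y))) from by simp,
      show ∀ y : Y, ¬ (some (Sum.inr y) = (none : Option (X ⊕ Y))) from by simp]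
    constructor
    · intro h; exact Or.inr (Or.inr ⟨a.mpr h, b.mpr h⟩)
    · rintro ((⟨_, ⟨x, hx⟩⟩) | (⟨_, ⟨y, hy⟩⟩) | ⟨h, _⟩)
      · exact absurd hx (by simp)
      · exact absurd hy (by simp)
      · exact a.mp h
  · have a := e1 (some x)
    simp only [Set.mem_preimage] at a
    simp only [show (j1 (some x) : Option (X ⊕ Y)) = some (Sum.inl x) from rfl] at a
    simp only [Set.mem_union, Set.mem_inter_iff, C1, C2, Set.mem_range]
    constructor
    · intro h; exact Or.inl ⟨a.mpr h, ⟨x, rfl⟩⟩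
    · rintro ((⟨h, _⟩) | (⟨_, ⟨y, hy⟩⟩) | ⟨h, _⟩)
      · exact a.mp h
      · exact absurd hy (by simp)
      · exact a.mp h
  · have b := e2 (some y)
    simp only [Set.mem_preimage] at b
    simp only [show (j2 (some y) : Option (X ⊕ Y)) = some (Sum.inr y) from rfl] at b
    simp only [Set.mem_union, Set.mem_inter_iff, C1, C2, Set.mem_range]
    constructor
    · intro h; exact Or.inr (Or.inl ⟨b.mpr h, ⟨y, rfl⟩⟩)
    · rintro ((⟨_, ⟨x, hx⟩⟩) | (⟨h, _⟩) | ⟨_, h⟩)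
      · exact absurd hx (by simp)
      · exact b.mp h
      · exact b.mp h

lemma plus_preimage_j1 {U : Set (Option (X ⊕ Y))} (hU : IsOpen[plusTop (X ⊕ Y)] U) :
    IsOpen[plusTop X] (j1 ⁻¹' U) := by
  rw [isOpen_plus_iff] at hU ⊢
  have : (some : X → Option X) ⁻¹' (j1 ⁻¹' U) =
      Sum.inl ⁻¹' ((some : X ⊕ Y → Option (X ⊕ Y)) ⁻¹' U) := rfl
  rw [this]
  exact hU.preimage continuous_inl

lemma plus_preimage_j2 {U : Set (Option (X ⊕ Y))} (hU : IsOpen[plusTop (X ⊕ Y)] U) :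
    IsOpen[plusTop Y] (j2 ⁻¹' U) := by
  rw [isOpen_plus_iff] at hU ⊢
  have : (some : Y → Option Y) ⁻¹' (j2 ⁻¹' U) =
      Sum.inr ⁻¹' ((some : X ⊕ Y → Option (X ⊕ Y)) ⁻¹' U) := rfl
  rw [this]
  exact hU.preimage continuous_inr

/-- The pullback of a pointed extension of `X ⊕ Y` along `j1`. -/
def pullExt1 (R : PointedExt (X ⊕ Y)) : PointedExt X where
  top := TopologicalSpace.induced j1 R.top
  t2 := by
    letI := R.top; haveI := R.t2
    letI : TopologicalSpace (Option X) := TopologicalSpace.induced j1 R.top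
    exact T2Space.of_injective_continuous j1_inj continuous_induced_dom
  cg := by
    letI := R.top; haveI := R.t2; haveI := R.cg
    letI : TopologicalSpace (Option X) := TopologicalSpace.induced j1 R.top
    haveI : T2Space (Option X) := T2Space.of_injective_continuous j1_inj continuous_induced_dom
    have hcl : IsClosedEmbedding (j1 : Option X → Option (X ⊕ Y)) := by
      refine ⟨⟨⟨rfl⟩, j1_inj⟩, ?_⟩
      rw [← isOpen_compl_iff, compl_range_j1, C2_eq]
      exact R.emb.isOpenMap _ isOpen_range_inr
    refine compactlyGeneratedSpace_of_isClosed_of_t2 fun s hs => ?_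
    have h1 : IsClosed ((j1 : Option X → Option (X ⊕ Y)) '' s) := by
      apply CompactlyGeneratedSpace.isClosed
      intro K hK
      rw [← Set.image_inter_preimage]
      exact hcl.isClosedMap _ (hs _ (hcl.isCompact_preimage hK))
    have h2 := h1.preimage (continuous_induced_dom (f := (j1 : Option X → Option (X ⊕ Y))) (t := R.top))
    rwa [Set.preimage_image_eq _ j1_inj] at h2
  emb := by
    letI := R.top
    letI : TopologicalSpace (Option X) := TopologicalSpace.induced j1 R.top
    refine IsOpenEmbedding.of_continuous_injective_isOpenMap ?_ (Option.some_injective _) ?_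
    · refine continuous_induced_rng.mpr ?_
      exact R.emb.continuous.comp continuous_inl
    · intro S hS
      rw [isOpen_induced_iff]
      refine ⟨(some : X ⊕ Y → Option (X ⊕ Y)) '' (Sum.inl '' S),
        R.emb.isOpenMap _ (isOpenMap_inl _ hS), ?_⟩
      rw [j1_preimage_some_image, Set.preimage_image_eq _ Sum.inl_injective]

/-- The pullback of a pointed extension of `X ⊕ Y` along `j2`. -/
def pullExt2 (R : PointedExt (X ⊕ Y)) : PointedExt Y where
  top := TopologicalSpace.induced j2 R.top
  t2 := by
    letI := R.top; haveI := R.t2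
    letI : TopologicalSpace (Option Y) := TopologicalSpace.induced j2 R.top
    exact T2Space.of_injective_continuous j2_inj continuous_induced_dom
  cg := by
    letI := R.top; haveI := R.t2; haveI := R.cg
    letI : TopologicalSpace (Option Y) := TopologicalSpace.induced j2 R.top
    haveI : T2Space (Option Y) := T2Space.of_injective_continuous j2_inj continuous_induced_dom
    have hcl : IsClosedEmbedding (j2 : Option Y → Option (X ⊕ Y)) := by
      refine ⟨⟨⟨rfl⟩, j2_inj⟩, ?_⟩
      rw [← isOpen_compl_iff]
      have : (Set.range (j2 : Option Y → Option (X ⊕ Y)))ᶜ = C1 := by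
        ext z; rcases z with _ | (x | y) <;> simp [C1, j2]
      rw [this, C1_eq]
      exact R.emb.isOpenMap _ isOpen_range_inl
    refine compactlyGeneratedSpace_of_isClosed_of_t2 fun s hs => ?_
    have h1 : IsClosed ((j2 : Option Y → Option (X ⊕ Y)) '' s) := by
      apply CompactlyGeneratedSpace.isClosed
      intro K hK
      rw [← Set.image_inter_preimage]
      exact hcl.isClosedMap _ (hs _ (hcl.isCompact_preimage hK))
    have h2 := h1.preimage (continuous_induced_dom (f := (j2 : Option Y → Option (X ⊕ Y))) (t := R.top))
    rwa [Set.preimage_image_eq _ j2_inj] at h2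
  emb := by
    letI := R.top
    letI : TopologicalSpace (Option Y) := TopologicalSpace.induced j2 R.top
    refine IsOpenEmbedding.of_continuous_injective_isOpenMap ?_ (Option.some_injective _) ?_
    · refine continuous_induced_rng.mpr ?_
      exact R.emb.continuous.comp continuous_inr
    · intro S hS
      rw [isOpen_induced_iff]
      refine ⟨(some : X ⊕ Y → Option (X ⊕ Y)) '' (Sum.inr '' S),
        R.emb.isOpenMap _ (isOpenMap_inr _ hS), ?_⟩
      rw [j2_preimage_some_image, Set.preimage_image_eq _ Sum.inr_injective]

@[simp] lemma pullExt1_top (R : PointedExt (X ⊕ Y)) :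
    (pullExt1 R).top = TopologicalSpace.induced j1 R.top := rfl

@[simp] lemma pullExt2_top (R : PointedExt (X ⊕ Y)) :
    (pullExt2 R).top = TopologicalSpace.induced j2 R.top := rfl

lemma plus_le_pull1 (R : PointedExt (X ⊕ Y)) : plusTop X ≤ (pullExt1 R).top := by
  letI := R.top
  rw [TopologicalSpace.le_def]
  intro V hV
  rw [pullExt1_top, isOpen_induced_iff] at hV
  obtain ⟨O, hO, rfl⟩ := hV
  rw [isOpen_plus_iff]
  have hO' : IsOpen[plusTop (X ⊕ Y)] O := (TopologicalSpace.le_def.mp (plus_le R)) O hO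
  rw [isOpen_plus_iff] at hO'
  have : (some : X → Option X) ⁻¹' (j1 ⁻¹' O) =
      Sum.inl ⁻¹' ((some : X ⊕ Y → Option (X ⊕ Y)) ⁻¹' O) := rfl
  rw [this]
  exact hO'.preimage continuous_inl

lemma plus_le_pull2 (R : PointedExt (X ⊕ Y)) : plusTop Y ≤ (pullExt2 R).top := by
  letI := R.top
  rw [TopologicalSpace.le_def]
  intro V hV
  rw [pullExt2_top, isOpen_induced_iff] at hV
  obtain ⟨O, hO, rfl⟩ := hV
  rw [isOpen_plus_iff]
  have hO' : IsOpen[plusTop (X ⊕ Y)] O := (TopologicalSpace.le_def.mp (plus_le R)) O hO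
  rw [isOpen_plus_iff] at hO'
  have : (some : Y → Option Y) ⁻¹' (j2 ⁻¹' O) =
      Sum.inr ⁻¹' ((some : X ⊕ Y → Option (X ⊕ Y)) ⁻¹' O) := rfl
  rw [this]
  exact hO'.preimage continuous_inr

lemma pairs_pull1 (P : PointedExt X) (Q : PointedExt Y) (R : PointedExt (X ⊕ Y))
    (hWR : wedgeTop P Q ⊓ R.top = plusTop (X ⊕ Y)) : Pairs P (pullExt1 R) := by
  rw [Pairs]
  apply le_antisymm
  · rw [TopologicalSpace.le_def]
    intro V hV
    have hφ : IsOpen[plusTop (X ⊕ Y)] (phi1 V) := by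
      rw [isOpen_plus_iff] at hV ⊢
      rw [isOpen_sum_iff]
      constructor
      · rw [some_preimage_phi1_inl]; exact hV
      · rw [some_preimage_phi1_inr]; exact isOpen_univ
    rw [← hWR] at hφ
    have hcont : Continuous[P.top ⊓ (pullExt1 R).top, wedgeTop P Q ⊓ R.top] j1 :=
      continuous_inf_map (continuous_j1 P Q) continuous_induced_dom
    have h := (continuous_def.mp hcont) _ hφ
    rwa [j1_preimage_phi1] at h
  · exact le_inf (plus_le P) (plus_le_pull1 R)

lemma pairs_pull2 (P : PointedExt X) (Q : PointedExt Y) (R : PointedExt (X ⊕ Y))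
    (hWR : wedgeTop P Q ⊓ R.top = plusTop (X ⊕ Y)) : Pairs Q (pullExt2 R) := by
  rw [Pairs]
  apply le_antisymm
  · rw [TopologicalSpace.le_def]
    intro V hV
    have hφ : IsOpen[plusTop (X ⊕ Y)] (phi2 V) := by
      rw [isOpen_plus_iff] at hV ⊢
      rw [isOpen_sum_iff]
      constructor
      · rw [some_preimage_phi2_inl]; exact isOpen_univ
      · rw [some_preimage_phi2_inr]; exact hV
    rw [← hWR] at hφ
    have hcont : Continuous[Q.top ⊓ (pullExt2 R).top, wedgeTop P Q ⊓ R.top] j2 :=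
      continuous_inf_map (continuous_j2 P Q) continuous_induced_dom
    have h := (continuous_def.mp hcont) _ hφ
    rwa [j2_preimage_phi2] at h
  · exact le_inf (plus_le Q) (plus_le_pull2 R)

theorem wedge_isNegation (P NP : PointedExt X) (Q NQ : PointedExt Y)
    (W NW : PointedExt (X ⊕ Y)) (hP : IsNegation P NP) (hQ : IsNegation Q NQ)
    (hW : W.top = wedgeTop P Q) (hNW : NW.top = wedgeTop NP NQ) : IsNegation W NW := by
  constructor
  · -- Pairs
    rw [Pairs, hW, hNW]
    apply le_antisymm
    · rw [TopologicalSpace.le_def]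
      intro U hU
      have h1 : IsOpen[plusTop X] (j1 ⁻¹' U) := plus_preimage_j1 hU
      have h2 : IsOpen[plusTop Y] (j2 ⁻¹' U) := plus_preimage_j2 hU
      rw [← hP.1, ← generateFrom_union_isOpen] at h1
      rw [← hQ.1, ← generateFrom_union_isOpen] at h2
      have hφ1 : IsOpen[wedgeTop P Q ⊓ wedgeTop NP NQ] (phi1 (j1 ⁻¹' U)) := by
        refine isOpen_of_generateOpen_map _ phi1 C2 ?_ ?_ ?_ phi1_inter phi1_sUnion h1
        · rintro s (hs | hs)
          · exact (phi1_open P Q hs).mono inf_le_left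
          · exact (phi1_open NP NQ hs).mono inf_le_right
        · exact (phi1_open P Q (@isOpen_univ _ P.top)).mono inf_le_left
        · exact (isOpen_C2 P Q).mono inf_le_left
      have hφ2 : IsOpen[wedgeTop P Q ⊓ wedgeTop NP NQ] (phi2 (j2 ⁻¹' U)) := by
        refine isOpen_of_generateOpen_map _ phi2 C1 ?_ ?_ ?_ phi2_inter phi2_sUnion h2
        · rintro s (hs | hs)
          · exact (phi2_open P Q hs).mono inf_le_left
          · exact (phi2_open NP NQ hs).mono inf_le_right
        · exact (phi2_open P Q (@isOpen_univ _ Q.top)).mono inf_le_left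
        · exact (isOpen_C1 P Q).mono inf_le_left
      rw [eq_phi_inter_phi U]
      letI := wedgeTop P Q ⊓ wedgeTop NP NQ
      exact hφ1.inter hφ2
    · exact le_inf (plus_le_wedge P Q) (plus_le_wedge NP NQ)
  · -- maximality
    intro R hR
    rw [Pairs, hW] at hR
    have le1 : (pullExt1 R).top ≤ NP.top := hP.2 _ (pairs_pull1 P Q R hR)
    have le2 : (pullExt2 R).top ≤ NQ.top := hQ.2 _ (pairs_pull2 P Q R hR)
    rw [hNW, TopologicalSpace.le_def]
    intro U hU
    obtain ⟨h1, h2⟩ := (wedge_isOpen_iff NP NQ).mp hU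
    have h1' : IsOpen[(pullExt1 R).top] (j1 ⁻¹' U) := TopologicalSpace.le_def.mp le1 _ h1
    have h2' : IsOpen[(pullExt2 R).top] (j2 ⁻¹' U) := TopologicalSpace.le_def.mp le2 _ h2
    rw [pullExt1_top] at h1'
    rw [pullExt2_top] at h2'
    letI := R.top
    obtain ⟨O₁, hO₁, hO₁e⟩ := isOpen_induced_iff.mp h1'
    obtain ⟨O₂, hO₂, hO₂e⟩ := isOpen_induced_iff.mp h2'
    have hC1 : IsOpen[R.top] C1 := by
      rw [C1_eq]; exact R.emb.isOpenMap _ isOpen_range_inl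
    have hC2 : IsOpen[R.top] C2 := by
      rw [C2_eq]; exact R.emb.isOpenMap _ isOpen_range_inr
    rw [U_eq_of_preimages hO₁e hO₂e]
    exact ((hO₁.inter hC1).union ((hO₂.inter hC2).union (hO₁.inter hO₂)))

end Top

end WedgeAux

/-- For pointed extensions `X_∗` of `X` and `Y_∗` of `Y`, the wedge sum
`X_∗ ∨ Y_∗` is a pointed extension of `X ⊔ Y`; its negation satisfies
`(X_∗ ∨ Y_∗)^¬ = X_∗^¬ ∨ Y_∗^¬`; and if `X_∗` and `Y_∗` are well-pointed then so is
`X_∗ ∨ Y_∗`. -/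
theorem wedge_pointedExt_negation (X Y : Type u)
    [TopologicalSpace X] [LocallyCompactSpace X] [T2Space X]
    [TopologicalSpace Y] [LocallyCompactSpace Y] [T2Space Y]
    (P : PointedExt X) (Q : PointedExt Y) :
    (∃ W : PointedExt (X ⊕ Y), W.top = wedgeTop P Q) ∧
    (∀ (NP : PointedExt X) (NQ : PointedExt Y) (W NW : PointedExt (X ⊕ Y)),
      IsNegation P NP → IsNegation Q NQ →
      W.top = wedgeTop P Q → NW.top = wedgeTop NP NQ → IsNegation W NW) ∧
    (WellPointed P → WellPointed Q →
      ∀ W : PointedExt (X ⊕ Y), W.top = wedgeTop P Q → WellPointed W) := by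
  refine ⟨⟨WedgeAux.wedgeExt P Q, rfl⟩, ?_, ?_⟩
  · intro NP NQ W NW hNP hNQ hW hNW
    exact WedgeAux.wedge_isNegation P NP Q NQ W NW hNP hNQ hW hNW
  · rintro ⟨NP, NNP, hP1, hP2, hP3⟩ ⟨NQ, NNQ, hQ1, hQ2, hQ3⟩ W hW
    refine ⟨WedgeAux.wedgeExt NP NQ, WedgeAux.wedgeExt NNP NNQ, ?_, ?_, ?_⟩
    · exact WedgeAux.wedge_isNegation P NP Q NQ W _ hP1 hQ1 hW rfl
    · exact WedgeAux.wedge_isNegation NP NNP NQ NNQ _ _ hP2 hQ2 rfl rfl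
    · show wedgeTop NNP NNQ = W.top
      rw [hW]
      simp only [wedgeTop, hP3, hQ3]
end
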